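/- arXiv:2605.16124 — 7 statements merged into one kernel-verified Lean document; each statement's English description precedes it below -/
import Mathlib

section
/- If L is a positive semidefinite linear functional on a unital commutative ℝ-algebra A with L(1)=1, and a ∈ A, then v_L(a) < ∞ if and only if there exists c ∈ [0,∞) such that |L(aⁿ)| ≤ cⁿ for all n ∈ ℕ₀. Moreover, in that case v_L(a) = inf{c ∈ [0,∞) : |L(aⁿ)| ≤ cⁿ for all n ∈ ℕ₀}. -/
/-!
Cauchy–Schwarz for the positive semidefinite form `(x, y) ↦ L (x * y)` makes the even moments
`s n = L (a ^ (2 * n))` log-convex, `s (n + 1) ^ 2 ≤ s n * s (n + 2)`, so the ratios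
`s (n + 1) / s n` are nondecreasing. A bound `M` on the ratios therefore gives `s n ≤ M ^ n`,
and Cauchy–Schwarz once more gives `|L (a ^ m)| ≤ √M ^ m`. Conversely, if `s n ≤ c ^ (2 * n)`,
no ratio can exceed `c ^ 2`, since from that ratio on `s` would grow geometrically faster than
`c ^ (2 * n)`. Hence `√(sup ratios)` is the least admissible `c`.
-/

open MeasureTheory

variable {A : Type*} [CommRing A] [Algebra ℝ A]

/-- The set of ratios `L(a^{2n+2})/L(a^{2n})` over `n` with `L(a^{2n}) ≠ 0`. -/
def ratioSet (L : A →ₗ[ℝ] ℝ) (a : A) : Set ℝ :=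
  {r | ∃ n : ℕ, L (a ^ (2 * n)) ≠ 0 ∧ r = L (a ^ (2 * n + 2)) / L (a ^ (2 * n))}

/-- `v_L(a) = sqrt( sup_{n, L(a^{2n}) ≠ 0} L(a^{2n+2})/L(a^{2n}) )`. -/
noncomputable def vL (L : A →ₗ[ℝ] ℝ) (a : A) : ℝ :=
  Real.sqrt (sSup (ratioSet L a))

theorem le_of_forall_pow_mul_le_mul_pow {r q K C : ℝ} (hK : 0 < K) (hq : 0 ≤ q)
    (h : ∀ m : ℕ, r ^ m * K ≤ C * q ^ m) : r ≤ q := by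
  by_contra! hqr
  rcases hq.eq_or_lt with rfl | hq
  · have := h 1
    simp only [pow_one, mul_zero] at this
    exact (mul_pos hqr hK).not_ge this
  · obtain ⟨m, hm⟩ := pow_unbounded_of_one_lt (C / K) ((one_lt_div hq).2 hqr)
    rw [div_pow, div_lt_div_iff₀ hK (pow_pos hq m)] at hm
    linarith [h m]

section LogConvex

variable {s : ℕ → ℝ}

theorem succ_eq_zero_of_sq_succ_le (hs : ∀ k, s (k + 1) ^ 2 ≤ s k * s (k + 2)) {n : ℕ}
    (hn : s n = 0) : s (n + 1) = 0 := by
  have := hs n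
  rwa [hn, zero_mul, sq_nonpos_iff] at this

theorem le_pow_mul_of_forall_div_le (hs0 : ∀ k, 0 ≤ s k)
    (hs : ∀ k, s (k + 1) ^ 2 ≤ s k * s (k + 2)) {M : ℝ} (hM : 0 ≤ M)
    (hratio : ∀ k, s k ≠ 0 → s (k + 1) / s k ≤ M) (n : ℕ) : s n ≤ M ^ n * s 0 := by
  refine le_geom hM n fun k _ => ?_
  rcases (hs0 k).eq_or_lt with hk | hk
  · rw [succ_eq_zero_of_sq_succ_le hs hk.symm, ← hk, mul_zero]
  · exact (div_le_iff₀ hk).1 (hratio k hk.ne')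

theorem mul_succ_le_of_mul_le (hs0 : ∀ k, 0 ≤ s k)
    (hs : ∀ k, s (k + 1) ^ 2 ≤ s k * s (k + 2)) {r : ℝ} {n : ℕ} (h : r * s n ≤ s (n + 1)) :
    r * s (n + 1) ≤ s (n + 2) := by
  rcases (hs0 n).eq_or_lt with hn | hn
  · rw [succ_eq_zero_of_sq_succ_le hs hn.symm, mul_zero]
    exact hs0 _
  · refine le_of_mul_le_mul_left ?_ hn
    calc s n * (r * s (n + 1)) = r * s n * s (n + 1) := by ring
      _ ≤ s (n + 1) ^ 2 := by rw [sq]; exact mul_le_mul_of_nonneg_right h (hs0 _)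
      _ ≤ s n * s (n + 2) := hs n

theorem pow_div_mul_le (hs0 : ∀ k, 0 ≤ s k) (hs : ∀ k, s (k + 1) ^ 2 ≤ s k * s (k + 2))
    {n : ℕ} (hn : 0 < s n) (m : ℕ) : (s (n + 1) / s n) ^ m * s n ≤ s (n + m) := by
  have hstep : ∀ k, s (n + 1) / s n * s (n + k) ≤ s (n + k + 1) := by
    intro k
    induction k with
    | zero => exact (div_mul_cancel₀ _ hn.ne').le
    | succ k ih => exact mul_succ_le_of_mul_le hs0 hs ih
  exact geom_le (u := fun k => s (n + k)) (div_nonneg (hs0 _) hn.le) m fun k _ => hstep k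

theorem div_le_of_forall_le_pow (hs0 : ∀ k, 0 ≤ s k)
    (hs : ∀ k, s (k + 1) ^ 2 ≤ s k * s (k + 2)) {q : ℝ} (hq : 0 ≤ q)
    (hbound : ∀ k, s k ≤ q ^ k) {n : ℕ} (hn : s n ≠ 0) : s (n + 1) / s n ≤ q := by
  have hn' : 0 < s n := (hs0 n).lt_of_ne' hn
  refine le_of_forall_pow_mul_le_mul_pow hn' hq (C := q ^ n) fun m => ?_
  calc (s (n + 1) / s n) ^ m * s n ≤ s (n + m) := pow_div_mul_le hs0 hs hn' m
    _ ≤ q ^ (n + m) := hbound _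
    _ = q ^ n * q ^ m := pow_add q n m

end LogConvex

section PositiveFunctional

variable {L : A →ₗ[ℝ] ℝ}

theorem sq_map_mul_le (hL : ∀ x : A, 0 ≤ L (x ^ 2)) (x y : A) :
    L (x * y) ^ 2 ≤ L (x ^ 2) * L (y ^ 2) := by
  have hquad : ∀ t : ℝ, 0 ≤ L (y ^ 2) * (t * t) + 2 * L (x * y) * t + L (x ^ 2) := by
    intro t
    have hexp : (x + t • y) ^ 2 = x ^ 2 + (2 * t) • (x * y) + (t ^ 2) • (y ^ 2) := by
      rw [add_sq, smul_pow, mul_smul_comm, two_mul, add_mul, smul_add, two_mul, add_smul]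
    have := hL (x + t • y)
    rw [hexp, map_add, map_add, map_smul, map_smul, smul_eq_mul, smul_eq_mul] at this
    linarith
  have := discrim_le_zero hquad
  rw [discrim] at this
  linarith

theorem sq_map_pow_add_le (hL : ∀ x : A, 0 ≤ L (x ^ 2)) (a : A) (i j : ℕ) :
    L (a ^ (i + j)) ^ 2 ≤ L (a ^ (2 * i)) * L (a ^ (2 * j)) := by
  simpa only [← pow_add, ← pow_mul'] using sq_map_mul_le hL (a ^ i) (a ^ j)

theorem map_pow_two_mul_nonneg (hL : ∀ x : A, 0 ≤ L (x ^ 2)) (a : A) (n : ℕ) :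
    0 ≤ L (a ^ (2 * n)) := by
  rw [pow_mul']
  exact hL _

theorem sq_map_pow_two_mul_succ_le (hL : ∀ x : A, 0 ≤ L (x ^ 2)) (a : A) (n : ℕ) :
    L (a ^ (2 * (n + 1))) ^ 2 ≤ L (a ^ (2 * n)) * L (a ^ (2 * (n + 2))) := by
  convert sq_map_pow_add_le hL a n (n + 2) using 4
  ring

theorem abs_map_pow_le_sqrt_pow (hL : ∀ x : A, 0 ≤ L (x ^ 2)) (h1 : L 1 = 1) {a : A} {M : ℝ}
    (hM : M ∈ upperBounds (ratioSet L a)) (m : ℕ) : |L (a ^ m)| ≤ √M ^ m := by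
  have hs0 := map_pow_two_mul_nonneg hL a
  have hratio : ∀ k, L (a ^ (2 * k)) ≠ 0 → L (a ^ (2 * (k + 1))) / L (a ^ (2 * k)) ≤ M :=
    fun k hk => hM ⟨k, hk, rfl⟩
  have hM0 : 0 ≤ M := (div_nonneg (hs0 1) (hs0 0)).trans (hratio 0 (by simp [h1]))
  have heven : ∀ k, L (a ^ (2 * k)) ≤ M ^ k := fun k => by
    simpa [h1] using le_pow_mul_of_forall_div_le hs0 (sq_map_pow_two_mul_succ_le hL a) hM0 hratio k
  have hsplit : m / 2 + (m - m / 2) = m := Nat.add_sub_cancel' (Nat.div_le_self m 2)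
  refine abs_le_of_sq_le_sq ?_ (by positivity)
  calc L (a ^ m) ^ 2 = L (a ^ (m / 2 + (m - m / 2))) ^ 2 := by rw [hsplit]
    _ ≤ L (a ^ (2 * (m / 2))) * L (a ^ (2 * (m - m / 2))) := sq_map_pow_add_le hL a _ _
    _ ≤ M ^ (m / 2) * M ^ (m - m / 2) := mul_le_mul (heven _) (heven _) (hs0 _) (by positivity)
    _ = (√M ^ m) ^ 2 := by rw [← pow_add, hsplit, ← pow_mul, mul_comm, pow_mul, Real.sq_sqrt hM0]

theorem sq_mem_upperBounds_ratioSet (hL : ∀ x : A, 0 ≤ L (x ^ 2)) {a : A} {c : ℝ}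
    (hbound : ∀ n : ℕ, |L (a ^ n)| ≤ c ^ n) : c ^ 2 ∈ upperBounds (ratioSet L a) := by
  rintro r ⟨n, hn, rfl⟩
  exact div_le_of_forall_le_pow (map_pow_two_mul_nonneg hL a) (sq_map_pow_two_mul_succ_le hL a)
    (sq_nonneg c) (fun k => (le_abs_self _).trans ((hbound _).trans_eq (pow_mul c 2 k))) hn

end PositiveFunctional

theorem stmt0 (L : A →ₗ[ℝ] ℝ) (hpsd : ∀ x : A, 0 ≤ L (x ^ 2)) (h1 : L 1 = 1) (a : A) :
    (BddAbove (ratioSet L a) ↔ ∃ c : ℝ, 0 ≤ c ∧ ∀ n : ℕ, |L (a ^ n)| ≤ c ^ n) ∧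
    (BddAbove (ratioSet L a) →
      vL L a = sInf {c : ℝ | 0 ≤ c ∧ ∀ n : ℕ, |L (a ^ n)| ≤ c ^ n}) := by
  have sqrt_mem : ∀ M ∈ upperBounds (ratioSet L a), 0 ≤ √M ∧ ∀ n : ℕ, |L (a ^ n)| ≤ √M ^ n :=
    fun M hM => ⟨Real.sqrt_nonneg M, abs_map_pow_le_sqrt_pow hpsd h1 hM⟩
  refine ⟨⟨fun ⟨M, hM⟩ => ⟨√M, sqrt_mem M hM⟩,
    fun ⟨c, _, hc⟩ => ⟨c ^ 2, sq_mem_upperBounds_ratioSet hpsd hc⟩⟩, fun hB => ?_⟩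
  have hne : (ratioSet L a).Nonempty := ⟨_, 0, by simp [h1], rfl⟩
  have hleast : IsLeast {c : ℝ | 0 ≤ c ∧ ∀ n : ℕ, |L (a ^ n)| ≤ c ^ n} (vL L a) :=
    ⟨sqrt_mem _ (isLUB_csSup hne hB).1, fun c ⟨hc0, hc⟩ =>
      (Real.sqrt_le_left hc0).2 (csSup_le hne (sq_mem_upperBounds_ratioSet hpsd hc))⟩
  exact hleast.csInf_eq.symm
end

section
/- Let L be a positive semidefinite linear functional on a unital commutative ℝ-algebra A with L(1)=1 such that v_L(a) < ∞ for all a ∈ A. Then v_L is submultiplicative: v_L(ab) ≤ v_L(a)·v_L(b) for all a, b ∈ A, and v_L(1) = 1. -/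
/-!
Write `q n = L (a ^ (2 * n))` and `s a = sSup (ratioSet L a) = vL L a ^ 2`. Cauchy–Schwarz for the
positive semidefinite form `(x, y) ↦ L (x * y)` makes `q` log-convex: `q (n + 1) ^ 2 ≤ q n * q (n + 2)`.
Hence the ratios `q (n + 1) / q n` increase, so `s a` is characterised by growth: `q n ≤ (s a) ^ n`,
and every `t ≥ 0` with `q n ≤ t ^ n` for all `n` bounds all the ratios. Cauchy–Schwarz once more gives
`L ((a * b) ^ (2 * n)) ^ 2 ≤ L (a ^ (4 * n)) * L (b ^ (4 * n)) ≤ (s a * s b) ^ (2 * n)`, whence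
`s (a * b) ≤ s a * s b`.
-/

open MeasureTheory

variable {A : Type*} [CommRing A] [Algebra ℝ A]

open Filter Topology

lemma le_of_forall_mul_pow_le {c C r t : ℝ} (hc : 0 < c) (ht : 0 ≤ t)
    (h : ∀ m : ℕ, c * r ^ m ≤ C * t ^ m) : r ≤ t := by
  by_contra! htr
  have hr : 0 < r := ht.trans_lt htr
  have hlim : Tendsto (fun m : ℕ ↦ C * (t / r) ^ m) atTop (𝓝 0) := by
    simpa using (tendsto_pow_atTop_nhds_zero_of_lt_one (div_nonneg ht hr.le)
      ((div_lt_one hr).mpr htr)).const_mul C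
  refine hc.not_ge (ge_of_tendsto' hlim fun m ↦ ?_)
  rw [div_pow, ← mul_div_assoc, le_div_iff₀ (pow_pos hr m)]
  exact h m

section LogConvex

variable {q : ℕ → ℝ}

lemma eq_zero_succ_of_log_convex (hq : ∀ n, q (n + 1) ^ 2 ≤ q n * q (n + 2)) {n : ℕ}
    (hn : q n = 0) : q (n + 1) = 0 := by
  have := hq n
  rw [hn, zero_mul] at this
  exact pow_eq_zero_iff two_ne_zero |>.mp (le_antisymm this (sq_nonneg _))

lemma mul_le_succ_of_log_convex (h0 : ∀ n, 0 ≤ q n)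
    (hq : ∀ n, q (n + 1) ^ 2 ≤ q n * q (n + 2)) {r : ℝ} {k : ℕ} (hk : r * q k ≤ q (k + 1)) :
    r * q (k + 1) ≤ q (k + 2) := by
  rcases (h0 k).eq_or_lt with hzero | hpos
  · rw [eq_zero_succ_of_log_convex hq hzero.symm, mul_zero]
    exact h0 _
  · refine le_of_mul_le_mul_left ?_ hpos
    calc q k * (r * q (k + 1)) = r * q k * q (k + 1) := by ring
      _ ≤ q (k + 1) ^ 2 := by rw [sq]; exact mul_le_mul_of_nonneg_right hk (h0 _)
      _ ≤ q k * q (k + 2) := hq k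

lemma div_le_of_log_convex_of_le_pow (h0 : ∀ n, 0 ≤ q n)
    (hq : ∀ n, q (n + 1) ^ 2 ≤ q n * q (n + 2)) {n : ℕ} (hn : q n ≠ 0) {t : ℝ} (ht : 0 ≤ t)
    (hpow : ∀ m, q m ≤ t ^ m) : q (n + 1) / q n ≤ t := by
  set r := q (n + 1) / q n
  have hr : 0 ≤ r := div_nonneg (h0 _) (h0 _)
  have hstep : ∀ k, n ≤ k → r * q k ≤ q (k + 1) := by
    intro k hk
    induction k, hk using Nat.le_induction with
    | base => exact (div_mul_cancel₀ _ hn).le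
    | succ k _ ih => exact mul_le_succ_of_log_convex h0 hq ih
  refine le_of_forall_mul_pow_le ((h0 n).lt_of_ne' hn) ht (C := t ^ n) fun m ↦ ?_
  calc q n * r ^ m = r ^ m * q (n + 0) := by ring_nf
    _ ≤ q (n + m) := geom_le hr m fun k _ ↦ hstep (n + k) (Nat.le_add_right n k)
    _ ≤ t ^ n * t ^ m := (hpow _).trans (pow_add t n m).le

end LogConvex

section PositiveFunctional

variable (L : A →ₗ[ℝ] ℝ)

lemma sq_apply_mul_le (hpsd : ∀ x : A, 0 ≤ L (x ^ 2)) (x y : A) :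
    L (x * y) ^ 2 ≤ L (x ^ 2) * L (y ^ 2) := by
  have hquad : ∀ t : ℝ, 0 ≤ L (y ^ 2) * (t * t) + 2 * L (x * y) * t + L (x ^ 2) := by
    intro t
    have hexp : (x + t • y) ^ 2 = x ^ 2 + (2 * t) • (x * y) + (t ^ 2) • (y ^ 2) := by
      simp only [Algebra.smul_def, map_mul, map_pow, map_ofNat]
      ring
    have h := hpsd (x + t • y)
    rw [hexp, map_add, map_add, map_smul, map_smul, smul_eq_mul, smul_eq_mul] at h
    linarith
  have hd := discrim_le_zero hquad
  rw [discrim] at hd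
  linarith

lemma apply_even_pow_nonneg (hpsd : ∀ x : A, 0 ≤ L (x ^ 2)) (a : A) (n : ℕ) :
    0 ≤ L (a ^ (2 * n)) := by
  rw [pow_mul']
  exact hpsd _

lemma apply_even_pow_log_convex (hpsd : ∀ x : A, 0 ≤ L (x ^ 2)) (a : A) (n : ℕ) :
    L (a ^ (2 * (n + 1))) ^ 2 ≤ L (a ^ (2 * n)) * L (a ^ (2 * (n + 2))) := by
  have h := sq_apply_mul_le L hpsd (a ^ n) (a ^ (n + 2))
  rwa [← pow_add, ← pow_mul, ← pow_mul, show n + (n + 2) = 2 * (n + 1) by ring,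
    mul_comm n 2, mul_comm (n + 2) 2] at h

lemma sSup_ratioSet_nonneg (hpsd : ∀ x : A, 0 ≤ L (x ^ 2)) (a : A) :
    0 ≤ sSup (ratioSet L a) := by
  refine Real.sSup_nonneg fun r ⟨n, _, hr⟩ ↦ hr ▸ div_nonneg ?_ (apply_even_pow_nonneg L hpsd a n)
  exact apply_even_pow_nonneg L hpsd a (n + 1)

lemma apply_even_pow_succ_le (hpsd : ∀ x : A, 0 ≤ L (x ^ 2)) (a : A)
    (hbdd : BddAbove (ratioSet L a)) (n : ℕ) :
    L (a ^ (2 * (n + 1))) ≤ sSup (ratioSet L a) * L (a ^ (2 * n)) := by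
  rcases (apply_even_pow_nonneg L hpsd a n).eq_or_lt with hzero | hpos
  · rw [eq_zero_succ_of_log_convex (q := fun n ↦ L (a ^ (2 * n)))
      (apply_even_pow_log_convex L hpsd a) hzero.symm, ← hzero, mul_zero]
  · rw [← div_le_iff₀ hpos]
    exact le_csSup hbdd ⟨n, hpos.ne', rfl⟩

lemma apply_even_pow_le (hpsd : ∀ x : A, 0 ≤ L (x ^ 2)) (h1 : L 1 = 1) (a : A)
    (hbdd : BddAbove (ratioSet L a)) (n : ℕ) :
    L (a ^ (2 * n)) ≤ sSup (ratioSet L a) ^ n := by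
  simpa [h1] using le_geom (u := fun n ↦ L (a ^ (2 * n))) (sSup_ratioSet_nonneg L hpsd a) n
    fun k _ ↦ apply_even_pow_succ_le L hpsd a hbdd k

lemma apply_mul_even_pow_le (hpsd : ∀ x : A, 0 ≤ L (x ^ 2)) (h1 : L 1 = 1)
    (hfin : ∀ a : A, BddAbove (ratioSet L a)) (a b : A) (n : ℕ) :
    L ((a * b) ^ (2 * n)) ≤ (sSup (ratioSet L a) * sSup (ratioSet L b)) ^ n := by
  have hs : 0 ≤ sSup (ratioSet L a) * sSup (ratioSet L b) :=
    mul_nonneg (sSup_ratioSet_nonneg L hpsd a) (sSup_ratioSet_nonneg L hpsd b)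
  refine le_of_pow_le_pow_left₀ two_ne_zero (pow_nonneg hs n) ?_
  calc L ((a * b) ^ (2 * n)) ^ 2 ≤ L (a ^ (2 * (2 * n))) * L (b ^ (2 * (2 * n))) := by
        simpa only [mul_pow, ← pow_mul, mul_comm _ 2] using
          sq_apply_mul_le L hpsd (a ^ (2 * n)) (b ^ (2 * n))
    _ ≤ sSup (ratioSet L a) ^ (2 * n) * sSup (ratioSet L b) ^ (2 * n) :=
        mul_le_mul (apply_even_pow_le L hpsd h1 a (hfin a) _)
          (apply_even_pow_le L hpsd h1 b (hfin b) _) (apply_even_pow_nonneg L hpsd b _)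
          (pow_nonneg (sSup_ratioSet_nonneg L hpsd a) _)
    _ = ((sSup (ratioSet L a) * sSup (ratioSet L b)) ^ n) ^ 2 := by ring

lemma sSup_ratioSet_mul_le (hpsd : ∀ x : A, 0 ≤ L (x ^ 2)) (h1 : L 1 = 1)
    (hfin : ∀ a : A, BddAbove (ratioSet L a)) (a b : A) :
    sSup (ratioSet L (a * b)) ≤ sSup (ratioSet L a) * sSup (ratioSet L b) := by
  have hs : 0 ≤ sSup (ratioSet L a) * sSup (ratioSet L b) :=
    mul_nonneg (sSup_ratioSet_nonneg L hpsd a) (sSup_ratioSet_nonneg L hpsd b)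
  refine Real.sSup_le (fun r ⟨n, hn, hr⟩ ↦ hr ▸ ?_) hs
  exact div_le_of_log_convex_of_le_pow (q := fun n ↦ L ((a * b) ^ (2 * n)))
    (apply_even_pow_nonneg L hpsd _) (apply_even_pow_log_convex L hpsd _) hn hs
    (apply_mul_even_pow_le L hpsd h1 hfin a b)

lemma ratioSet_one (h1 : L 1 = 1) : ratioSet L 1 = {1} := by
  ext r
  simp only [ratioSet, one_pow, h1, Set.mem_ofPred_eq, Set.mem_singleton_iff]
  exact ⟨fun ⟨_, _, hr⟩ ↦ by simpa using hr, fun hr ↦ ⟨0, one_ne_zero, by simpa using hr⟩⟩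

end PositiveFunctional

theorem stmt2 (L : A →ₗ[ℝ] ℝ) (hpsd : ∀ x : A, 0 ≤ L (x ^ 2)) (h1 : L 1 = 1)
    (hfin : ∀ a : A, BddAbove (ratioSet L a)) :
    (∀ a b : A, vL L (a * b) ≤ vL L a * vL L b) ∧ vL L 1 = 1 := by
  refine ⟨fun a b ↦ ?_, by rw [vL, ratioSet_one L h1, csSup_singleton, Real.sqrt_one]⟩
  rw [vL, vL, vL, ← Real.sqrt_mul (sSup_ratioSet_nonneg L hpsd a)]
  exact Real.sqrt_le_sqrt (sSup_ratioSet_mul_le L hpsd h1 hfin a b)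
end

section
/- Let L be a positive semidefinite linear functional on a unital commutative ℝ-algebra A which is v-bounded for a submultiplicative function v : A → [0,∞). Then for all a, b ∈ A, L(a²b²) ≤ v(a)²·L(b²); equivalently, the functional x ↦ L((v(a)² − a²)·x) is positive semidefinite for every a ∈ A. -/
/-!
Squaring the Cauchy–Schwarz inequality `L(c b²)² ≤ L(c² b²) L(b²)` repeatedly gives
`|L(c b²)|^N ≤ |L(c^N b²)| L(b²)^(N-1)` for `N = 2^n`, and v-boundedness bounds the right side
by `|C| v(b²) (v(c) L(b²))^N`. Letting `N → ∞` kills the constant, so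
`|L(c b²)| ≤ v(c) L(b²)`; the theorem is the case `c = a²`, since `v(a²) ≤ v(a)²`.
-/

variable {A : Type*} [CommRing A] [Algebra ℝ A]

open Filter Topology

lemma le_of_frequently_pow_le_mul_pow {x y K : ℝ} (hy : 0 ≤ y)
    (h : ∃ᶠ n in atTop, x ^ n ≤ K * y ^ n) : x ≤ y := by
  by_contra! hyx
  have hx : 0 < x := hy.trans_lt hyx
  have hsmall : Tendsto (fun n : ℕ => K * (y / x) ^ n) atTop (𝓝 0) := by
    simpa using (tendsto_pow_atTop_nhds_zero_of_lt_one (div_nonneg hy hx.le)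
      ((div_lt_one hx).mpr hyx)).const_mul K
  have hlarge : ∃ᶠ n in atTop, 1 ≤ K * (y / x) ^ n := by
    refine h.mono fun n hn => ?_
    rwa [div_pow, mul_div_assoc', le_div_iff₀ (pow_pos hx n), one_mul]
  exact (hlarge.and_eventually (hsmall.eventually (gt_mem_nhds one_pos))).exists.elim
    fun n hn => hn.1.not_gt hn.2

lemma map_pow_le_pow_of_submultiplicative {M : Type*} [Monoid M] (v : M → ℝ)
    (hv0 : ∀ a, 0 ≤ v a) (hvm : ∀ a b, v (a * b) ≤ v a * v b) (a : M) {n : ℕ}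
    (hn : n ≠ 0) :
    v (a ^ n) ≤ v a ^ n := by
  induction n with
  | zero => exact absurd rfl hn
  | succ n ih =>
    rcases eq_or_ne n 0 with rfl | hn'
    · simp
    calc v (a ^ (n + 1)) ≤ v (a ^ n) * v a := pow_succ a n ▸ hvm _ _
      _ ≤ v a ^ n * v a := mul_le_mul_of_nonneg_right (ih hn') (hv0 a)
      _ = v a ^ (n + 1) := (pow_succ _ _).symm

section PositiveFunctional

variable (L : A →ₗ[ℝ] ℝ) (hpsd : ∀ x : A, 0 ≤ L (x ^ 2))
include hpsd

lemma sq_map_mul_le_map_sq_mul_map_sq (x y : A) :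
    L (x * y) ^ 2 ≤ L (x ^ 2) * L (y ^ 2) := by
  have hquad : ∀ t : ℝ, 0 ≤ L (y ^ 2) * (t * t) + 2 * L (x * y) * t + L (x ^ 2) := by
    intro t
    have e : (t • y + x) ^ 2 = (t * t) • y ^ 2 + (2 * t) • (x * y) + x ^ 2 := by
      simp only [Algebra.smul_def, map_mul, map_ofNat]
      ring
    have := hpsd (t • y + x)
    rw [e, map_add, map_add, map_smul, map_smul, smul_eq_mul, smul_eq_mul] at this
    linarith
  have := discrim_le_zero hquad
  rw [discrim] at this
  linarith

lemma abs_map_mul_sq_pow_two_pow_le (c b : A) (n : ℕ) :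
    |L (c * b ^ 2)| ^ 2 ^ n ≤ |L (c ^ 2 ^ n * b ^ 2)| * L (b ^ 2) ^ (2 ^ n - 1) := by
  induction n with
  | zero => simp
  | succ n ih =>
    have hcs := sq_map_mul_le_map_sq_mul_map_sq L hpsd (c ^ 2 ^ n * b) b
    rw [mul_assoc, ← sq, mul_pow, ← pow_mul, ← pow_succ] at hcs
    have hexp : 2 ^ (n + 1) - 1 = 2 * (2 ^ n - 1) + 1 := by
      have := Nat.one_le_two_pow (n := n)
      rw [pow_succ]
      omega
    calc |L (c * b ^ 2)| ^ 2 ^ (n + 1) = (|L (c * b ^ 2)| ^ 2 ^ n) ^ 2 := by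
          rw [pow_succ 2 n, pow_mul]
      _ ≤ (|L (c ^ 2 ^ n * b ^ 2)| * L (b ^ 2) ^ (2 ^ n - 1)) ^ 2 :=
          pow_le_pow_left₀ (by positivity) ih 2
      _ = L (c ^ 2 ^ n * b ^ 2) ^ 2 * L (b ^ 2) ^ (2 * (2 ^ n - 1)) := by
          rw [mul_pow, sq_abs, pow_mul']
      _ ≤ L (c ^ 2 ^ (n + 1) * b ^ 2) * L (b ^ 2) * L (b ^ 2) ^ (2 * (2 ^ n - 1)) :=
          mul_le_mul_of_nonneg_right hcs (pow_nonneg (hpsd b) _)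
      _ ≤ |L (c ^ 2 ^ (n + 1) * b ^ 2)| * L (b ^ 2) ^ (2 ^ (n + 1) - 1) := by
          rw [hexp, pow_succ, mul_assoc, mul_comm (L (b ^ 2))]
          exact mul_le_mul_of_nonneg_right (le_abs_self _)
            (mul_nonneg (pow_nonneg (hpsd b) _) (hpsd b))

/-- The Berg–Christensen–Ressel inequality. -/
theorem abs_map_mul_sq_le (v : A → ℝ) (hv0 : ∀ a : A, 0 ≤ v a)
    (hvm : ∀ a b : A, v (a * b) ≤ v a * v b) (C : ℝ) (hbd : ∀ a : A, |L a| ≤ C * v a)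
    (c b : A) : |L (c * b ^ 2)| ≤ v c * L (b ^ 2) := by
  rcases (hpsd b).eq_or_lt with hb | hb
  · have := sq_map_mul_le_map_sq_mul_map_sq L hpsd (c * b) b
    rw [mul_assoc, ← sq, ← hb, mul_zero] at this
    rw [← hb, mul_zero, abs_nonpos_iff]
    exact pow_eq_zero_iff two_ne_zero |>.mp (le_antisymm this (sq_nonneg _))
  refine le_of_frequently_pow_le_mul_pow (mul_nonneg (hv0 c) hb.le)
    (K := |C| * v (b ^ 2) / L (b ^ 2)) (frequently_atTop.mpr fun m => ⟨2 ^ m,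
      Nat.lt_two_pow_self.le, ?_⟩)
  set N := 2 ^ m
  have hN : N ≠ 0 := pow_ne_zero _ two_ne_zero
  have hbound : |L (c ^ N * b ^ 2)| ≤ |C| * v (b ^ 2) * v c ^ N :=
    calc |L (c ^ N * b ^ 2)| ≤ |C| * v (c ^ N * b ^ 2) :=
          (hbd _).trans (mul_le_mul_of_nonneg_right (le_abs_self C) (hv0 _))
      _ ≤ |C| * (v c ^ N * v (b ^ 2)) := mul_le_mul_of_nonneg_left
          ((hvm _ _).trans (mul_le_mul_of_nonneg_right
            (map_pow_le_pow_of_submultiplicative v hv0 hvm c hN) (hv0 _))) (abs_nonneg C)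
      _ = |C| * v (b ^ 2) * v c ^ N := by ring
  calc |L (c * b ^ 2)| ^ N ≤ |L (c ^ N * b ^ 2)| * L (b ^ 2) ^ (N - 1) :=
        abs_map_mul_sq_pow_two_pow_le L hpsd c b m
    _ ≤ |C| * v (b ^ 2) * v c ^ N * L (b ^ 2) ^ (N - 1) :=
        mul_le_mul_of_nonneg_right hbound (pow_nonneg hb.le _)
    _ = |C| * v (b ^ 2) / L (b ^ 2) * (v c * L (b ^ 2)) ^ N := by
        have hpow : L (b ^ 2) ^ N = L (b ^ 2) ^ (N - 1) * L (b ^ 2) := by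
          rw [← pow_succ, Nat.sub_add_cancel (Nat.one_le_iff_ne_zero.mpr hN)]
        rw [mul_pow, hpow]
        field_simp

end PositiveFunctional

theorem stmt4_general (L : A →ₗ[ℝ] ℝ) (hpsd : ∀ x : A, 0 ≤ L (x ^ 2))
    (v : A → ℝ) (hv0 : ∀ a : A, 0 ≤ v a)
    (hvm : ∀ a b : A, v (a * b) ≤ v a * v b)
    (C : ℝ) (hbd : ∀ a : A, |L a| ≤ C * v a) :
    ∀ a : A, (∀ b : A, L (a ^ 2 * b ^ 2) ≤ (v a) ^ 2 * L (b ^ 2)) ∧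
      (∀ x : A, 0 ≤ L ((algebraMap ℝ A ((v a) ^ 2) - a ^ 2) * x ^ 2)) := by
  intro a
  have key (b : A) : L (a ^ 2 * b ^ 2) ≤ v a ^ 2 * L (b ^ 2) :=
    calc L (a ^ 2 * b ^ 2) ≤ v (a ^ 2) * L (b ^ 2) :=
          (le_abs_self _).trans (abs_map_mul_sq_le L hpsd v hv0 hvm C hbd _ _)
      _ ≤ v a ^ 2 * L (b ^ 2) := mul_le_mul_of_nonneg_right
          (map_pow_le_pow_of_submultiplicative v hv0 hvm a two_ne_zero) (hpsd b)
  refine ⟨key, fun x => ?_⟩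
  rw [sub_mul, ← Algebra.smul_def, map_sub, map_smul, smul_eq_mul]
  linarith [key x]

theorem stmt4 (L : A →ₗ[ℝ] ℝ) (hpsd : ∀ x : A, 0 ≤ L (x ^ 2))
    (v : A → ℝ) (hv0 : ∀ a : A, 0 ≤ v a)
    (hvm : ∀ a b : A, v (a * b) ≤ v a * v b) (hv1 : v 1 = 1)
    (C : ℝ) (hC : 0 < C) (hbd : ∀ a : A, |L a| ≤ C * v a) :
    ∀ a : A, (∀ b : A, L (a ^ 2 * b ^ 2) ≤ (v a) ^ 2 * L (b ^ 2)) ∧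
      (∀ x : A, 0 ≤ L ((algebraMap ℝ A ((v a) ^ 2) - a ^ 2) * x ^ 2)) :=
  stmt4_general L hpsd v hv0 hvm C hbd
end

section
/- Let A be a unital commutative ℝ-algebra and L : A → ℝ a linear functional with L(1)=1 such that for every a ∈ A there exists T_a > 0 with L((T_a − a)^p (T_a + a)^q) ≥ 0 for all p, q ∈ ℕ₀. Then L(a²) ≥ 0 for all a ∈ A, and L((T_a² − a²)·a^{2n}) ≥ 0 for all a ∈ A and n ∈ ℕ₀; consequently v_L(a) ≤ T_a for all a. -/
open MeasureTheory

variable {A : Type*} [CommRing A] [Algebra ℝ A]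

private lemma binom_aux (n j : ℕ) :
    2 * (n : ℝ) * (n.choose (j + 1)) ≤
      ((n : ℝ) + 2) * ((n.choose (j + 2) : ℝ) + (n.choose j : ℝ)) := by
  rcases le_or_gt (j + 1) n with h | h
  · have hj : j ≤ n := le_trans (Nat.le_succ j) h
    have h1 : (n.choose (j + 2) : ℝ) * ((j : ℝ) + 2) =
        (n.choose (j + 1) : ℝ) * ((n : ℝ) - ((j : ℝ) + 1)) := by
      have := congrArg (Nat.cast : ℕ → ℝ) (Nat.choose_succ_right_eq n (j + 1))
      push_cast [Nat.cast_sub h] at this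
      linarith [this]
    have h2 : (n.choose (j + 1) : ℝ) * ((j : ℝ) + 1) =
        (n.choose j : ℝ) * ((n : ℝ) - (j : ℝ)) := by
      have := congrArg (Nat.cast : ℕ → ℝ) (Nat.choose_succ_right_eq n j)
      push_cast [Nat.cast_sub hj] at this
      linarith [this]
    have hpos : (0 : ℝ) < ((j : ℝ) + 2) * ((n : ℝ) - (j : ℝ)) := by
      have : (j : ℝ) + 1 ≤ (n : ℝ) := by exact_mod_cast h
      nlinarith
    have expand : ((j : ℝ) + 2) * ((n : ℝ) - (j : ℝ)) *
        (((n : ℝ) + 2) * ((n.choose (j + 2) : ℝ) + (n.choose j : ℝ))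
          - 2 * (n : ℝ) * (n.choose (j + 1) : ℝ)) =
        (n.choose (j + 1) : ℝ) * ((n : ℝ) + 1) * (2 * ((j : ℝ) + 1) - (n : ℝ)) ^ 2 := by
      linear_combination (((n : ℝ) + 2) * ((n : ℝ) - (j : ℝ))) * h1
        - (((n : ℝ) + 2) * ((j : ℝ) + 2)) * h2
    have hsq : (0 : ℝ) ≤ (n.choose (j + 1) : ℝ) * ((n : ℝ) + 1) * (2 * ((j : ℝ) + 1) - (n : ℝ)) ^ 2 := by
      positivity
    nlinarith [expand, hsq, hpos]
  · rw [Nat.choose_eq_zero_of_lt h]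
    push_cast
    ring_nf
    positivity


private lemma addpow_smul (u v : A) (N : ℕ) :
    (u + v) ^ N = ∑ i ∈ Finset.range (N + 1), ((N.choose i : ℝ)) • (u ^ i * v ^ (N - i)) := by
  rw [add_pow]
  refine Finset.sum_congr rfl fun i hi => ?_
  rw [Algebra.smul_def, map_natCast, mul_comm]

private lemma sumS0 (u v : A) (n : ℕ) :
    ∑ i ∈ Finset.range (n + 3), ((n.choose i : ℝ)) • (u ^ i * v ^ (n + 2 - i))
      = (u + v) ^ n * v ^ 2 := by
  rw [show n + 3 = (n + 2) + 1 from rfl, Finset.sum_range_succ, Finset.sum_range_succ,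
    Nat.choose_eq_zero_of_lt (by omega), Nat.choose_eq_zero_of_lt (by omega)]
  push_cast
  rw [zero_smul, zero_smul, add_zero, add_zero, addpow_smul u v n, Finset.sum_mul]
  refine Finset.sum_congr rfl fun i hi => ?_
  have hi' : i ≤ n := by simpa [Nat.lt_succ_iff] using hi
  rw [smul_mul_assoc, mul_assoc, ← pow_add, show n - i + 2 = n + 2 - i by omega]

private lemma sumS1 (u v : A) (n : ℕ) :
    ∑ i ∈ Finset.range (n + 3),
        (if 1 ≤ i then ((n.choose (i - 1) : ℕ) : ℝ) else 0) • (u ^ i * v ^ (n + 2 - i))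
      = (u + v) ^ n * (u * v) := by
  rw [show n + 3 = (n + 2) + 1 from rfl, Finset.sum_range_succ']
  simp only [Nat.add_sub_cancel, le_add_iff_nonneg_left, zero_le, if_true]
  norm_num
  rw [Finset.sum_range_succ, Nat.choose_eq_zero_of_lt (by omega)]
  push_cast
  rw [zero_smul, add_zero, addpow_smul u v n, Finset.sum_mul]
  refine Finset.sum_congr rfl fun i hi => ?_
  have hi' : i ≤ n := by simpa [Nat.lt_succ_iff] using hi
  rw [smul_mul_assoc]
  congr 1
  rw [show n + 1 - i = (n - i) + 1 by omega, pow_succ, pow_succ]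
  ring

private lemma sumS2 (u v : A) (n : ℕ) :
    ∑ i ∈ Finset.range (n + 3),
        (if 2 ≤ i then ((n.choose (i - 2) : ℕ) : ℝ) else 0) • (u ^ i * v ^ (n + 2 - i))
      = (u + v) ^ n * u ^ 2 := by
  rw [show n + 3 = (n + 1) + 1 + 1 from rfl, Finset.sum_range_succ', Finset.sum_range_succ']
  norm_num
  rw [addpow_smul u v n, Finset.sum_mul]
  refine Finset.sum_congr rfl fun i hi => ?_
  have e0 : i + 1 + 1 = i + 2 := rfl
  have e1 : i + 2 - 2 = i := by omega
  have e2 : n + 2 - (i + 2) = n - i := by omega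
  rw [e0, e1, e2, smul_mul_assoc]
  congr 1
  rw [pow_add]
  ring

private lemma Gnonneg (n i : ℕ) :
    0 ≤ ((n:ℝ)+1) * (((n:ℝ)+2)*((n.choose i : ℝ)
          + (if 2 ≤ i then ((n.choose (i-2) : ℕ):ℝ) else 0))
        - 2*(n:ℝ)*(if 1 ≤ i then ((n.choose (i-1) : ℕ):ℝ) else 0))
      + (((n+2).choose i : ℕ) : ℝ) := by
  match i with
  | 0 =>
    norm_num
    positivity
  | 1 =>
    norm_num [Nat.choose_one_right]
    nlinarith [Nat.cast_nonneg (α := ℝ) n, sq_nonneg (n:ℝ)]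
  | (j+2) =>
    have hif1 : (1:ℕ) ≤ j + 2 := by omega
    have hif2 : (2:ℕ) ≤ j + 2 := by omega
    rw [if_pos hif1, if_pos hif2]
    have e1 : j + 2 - 2 = j := by omega
    have e2 : j + 2 - 1 = j + 1 := by omega
    rw [e1, e2]
    have hb := binom_aux n j
    have h1 : 0 ≤ ((n:ℝ)+1) := by positivity
    have h2 : (0:ℝ) ≤ (((n+2).choose (j+2) : ℕ) : ℝ) := by positivity
    nlinarith [hb, h1, h2]

private lemma key_step (L : A →ₗ[ℝ] ℝ) (t : ℝ) (ht : 0 < t) (a b : A)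
    (hb : ∀ p q : ℕ, 0 ≤ L ((algebraMap ℝ A t - a) ^ p * (algebraMap ℝ A t + a) ^ q * b)) :
    0 ≤ L (a ^ 2 * b) := by
  set T : A := algebraMap ℝ A t with hTdef
  have hs : 0 ≤ L b := by simpa using hb 0 0
  have main : ∀ n : ℕ, 0 ≤ 4*((n:ℝ)+2)*t^2 * L b + 4*((n:ℝ)+1)^2 * L (a^2*b) := by
    intro n
    have hw : ∀ i : ℕ, 0 ≤ L ((T - a) ^ i * (T + a) ^ (n + 2 - i) * b) :=
      fun i => hb i (n + 2 - i)
    set u : A := T - a with hu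
    set v : A := T + a with hv
    set G : ℕ → ℝ := fun i => ((n:ℝ)+1) * (((n:ℝ)+2)*((n.choose i : ℝ)
          + (if 2 ≤ i then ((n.choose (i-2) : ℕ):ℝ) else 0))
        - 2*(n:ℝ)*(if 1 ≤ i then ((n.choose (i-1) : ℕ):ℝ) else 0))
      + (((n+2).choose i : ℕ) : ℝ) with hG
    have hsum : 0 ≤ ∑ i ∈ Finset.range (n+3), G i * L (u ^ i * v ^ (n + 2 - i) * b) :=
      Finset.sum_nonneg fun i _ => mul_nonneg (Gnonneg n i) (hw i)
    have hpt : ∀ i, G i • (u ^ i * v ^ (n + 2 - i)) =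
        (((n:ℝ)+1)*((n:ℝ)+2)) • (((n.choose i : ℝ)) • (u ^ i * v ^ (n + 2 - i)))
        + (((n:ℝ)+1)*((n:ℝ)+2)) • ((if 2 ≤ i then ((n.choose (i-2) : ℕ):ℝ) else 0) • (u ^ i * v ^ (n + 2 - i)))
        - (((n:ℝ)+1)*(2*(n:ℝ))) • ((if 1 ≤ i then ((n.choose (i-1) : ℕ):ℝ) else 0) • (u ^ i * v ^ (n + 2 - i)))
        + ((((n+2).choose i : ℕ) : ℝ)) • (u ^ i * v ^ (n + 2 - i)) := by
      intro i
      simp only [smul_smul, ← add_smul, ← sub_smul]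
      congr 1
      simp only [hG]
      ring
    have hbig : ∑ i ∈ Finset.range (n+3), G i • (u ^ i * v ^ (n + 2 - i))
        = (((n:ℝ)+1)*((n:ℝ)+2)) • ((u+v)^n * v^2) + (((n:ℝ)+1)*((n:ℝ)+2)) • ((u+v)^n * u^2)
          - (((n:ℝ)+1)*(2*(n:ℝ))) • ((u+v)^n * (u*v)) + (u+v)^(n+2) := by
      rw [Finset.sum_congr rfl fun i _ => hpt i]
      rw [Finset.sum_add_distrib, Finset.sum_sub_distrib, Finset.sum_add_distrib,
        ← Finset.smul_sum, ← Finset.smul_sum, ← Finset.smul_sum,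
        sumS0 u v n, sumS1 u v n, sumS2 u v n]
      rw [show n + 3 = (n+2)+1 from rfl, ← addpow_smul u v (n+2)]
    have halg : (((n:ℝ)+1)*((n:ℝ)+2)) • ((u+v)^n * v^2) + (((n:ℝ)+1)*((n:ℝ)+2)) • ((u+v)^n * u^2)
          - (((n:ℝ)+1)*(2*(n:ℝ))) • ((u+v)^n * (u*v)) + (u+v)^(n+2)
        = ((2*t)^n * (4*((n:ℝ)+2)*t^2)) • (1:A) + ((2*t)^n * (4*((n:ℝ)+1)^2)) • a^2 := by
      rw [hu, hv, hTdef]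
      simp only [Algebra.smul_def, map_mul, map_pow, map_add, map_sub, map_one,
        map_natCast, map_ofNat]
      ring
    have hLid : ∑ i ∈ Finset.range (n+3), G i * L (u ^ i * v ^ (n+2-i) * b)
        = (2*t)^n * (4*((n:ℝ)+2)*t^2 * L b + 4*((n:ℝ)+1)^2 * L (a^2*b)) := by
      have e : ∑ i ∈ Finset.range (n+3), G i * L (u ^ i * v ^ (n+2-i) * b)
          = L ((∑ i ∈ Finset.range (n+3), G i • (u ^ i * v ^ (n+2-i))) * b) := by
        rw [Finset.sum_mul, map_sum]
        exact Finset.sum_congr rfl fun i _ => by rw [smul_mul_assoc, _root_.map_smul, smul_eq_mul]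
      rw [e, hbig, halg, add_mul, smul_mul_assoc, smul_mul_assoc, one_mul,
        map_add, _root_.map_smul, _root_.map_smul, smul_eq_mul, smul_eq_mul]
      ring
    rw [hLid] at hsum
    have hp : 0 < (2*t)^n := by positivity
    nlinarith [hsum, hp]
  refine le_of_forall_pos_le_add ?_
  intro ε hε
  obtain ⟨n, hn⟩ := exists_nat_gt (2*t^2*L b / ε)
  have h2 := main n
  have hts : 2*t^2*L b < ((n:ℝ)+1) * ε := by
    rw [div_lt_iff₀ hε] at hn
    nlinarith [hn, hε]
  have htss : 0 ≤ t^2 * L b := mul_nonneg (sq_nonneg t) hs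
  nlinarith [h2, hts, hs, htss, mul_lt_mul_of_pos_left hts
    (show (0:ℝ) < 4*((n:ℝ)+1) by positivity), mul_nonneg (Nat.cast_nonneg (α := ℝ) n) htss]

private lemma cone_pos (L : A →ₗ[ℝ] ℝ) (t : ℝ) (ht : 0 < t) (a : A)
    (hP : ∀ p q : ℕ, 0 ≤ L ((algebraMap ℝ A t - a) ^ p * (algebraMap ℝ A t + a) ^ q)) :
    ∀ (n p q : ℕ),
      0 ≤ L ((algebraMap ℝ A t - a) ^ p * (algebraMap ℝ A t + a) ^ q * a ^ (2 * n)) := by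
  intro n
  induction n with
  | zero => intro p q; simpa using hP p q
  | succ n ih =>
    intro p q
    have hb : ∀ p' q' : ℕ, 0 ≤ L ((algebraMap ℝ A t - a) ^ p' * (algebraMap ℝ A t + a) ^ q' *
        ((algebraMap ℝ A t - a) ^ p * (algebraMap ℝ A t + a) ^ q * a ^ (2 * n))) := by
      intro p' q'
      have h0 := ih (p' + p) (q' + q)
      have e : (algebraMap ℝ A t - a) ^ p' * (algebraMap ℝ A t + a) ^ q' *
          ((algebraMap ℝ A t - a) ^ p * (algebraMap ℝ A t + a) ^ q * a ^ (2 * n))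
          = (algebraMap ℝ A t - a) ^ (p' + p) * (algebraMap ℝ A t + a) ^ (q' + q) * a ^ (2 * n) := by
        rw [pow_add, pow_add]; ring
      rw [e]; exact h0
    have h1 := key_step L t ht a _ hb
    have e2 : a ^ 2 * ((algebraMap ℝ A t - a) ^ p * (algebraMap ℝ A t + a) ^ q * a ^ (2 * n))
        = (algebraMap ℝ A t - a) ^ p * (algebraMap ℝ A t + a) ^ q * a ^ (2 * (n + 1)) := by
      rw [show 2 * (n + 1) = 2 * n + 2 by ring, pow_add]; ring
    rwa [e2] at h1

theorem stmt5 (L : A →ₗ[ℝ] ℝ) (h1 : L 1 = 1) (T : A → ℝ) (hT : ∀ a : A, 0 < T a)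
    (h : ∀ (a : A) (p q : ℕ),
      0 ≤ L ((algebraMap ℝ A (T a) - a) ^ p * (algebraMap ℝ A (T a) + a) ^ q)) :
    (∀ a : A, 0 ≤ L (a ^ 2)) ∧
    (∀ (a : A) (n : ℕ), 0 ≤ L ((algebraMap ℝ A ((T a) ^ 2) - a ^ 2) * a ^ (2 * n))) ∧
    (∀ a : A, vL L a ≤ T a) := by
  have part1 : ∀ a : A, 0 ≤ L (a ^ 2) := by
    intro a
    have hb : ∀ p q : ℕ,
        0 ≤ L ((algebraMap ℝ A (T a) - a) ^ p * (algebraMap ℝ A (T a) + a) ^ q * 1) := by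
      intro p q; simpa using h a p q
    simpa using key_step L (T a) (hT a) a 1 hb
  have part2 : ∀ (a : A) (n : ℕ), 0 ≤ L ((algebraMap ℝ A ((T a) ^ 2) - a ^ 2) * a ^ (2 * n)) := by
    intro a n
    have h0 := cone_pos L (T a) (hT a) a (h a) n 1 1
    have e : (algebraMap ℝ A (T a) - a) ^ 1 * (algebraMap ℝ A (T a) + a) ^ 1 * a ^ (2 * n)
        = (algebraMap ℝ A ((T a) ^ 2) - a ^ 2) * a ^ (2 * n) := by
      rw [pow_one, pow_one, map_pow]; ring
    rwa [e] at h0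
  refine ⟨part1, part2, ?_⟩
  intro a
  rw [vL]
  have hTa := hT a
  have hsup : sSup (ratioSet L a) ≤ (T a) ^ 2 := by
    apply Real.sSup_le
    · rintro r ⟨n, hn0, rfl⟩
      have h0 : 0 ≤ L (a ^ (2 * n)) := by
        have hp := part1 (a ^ n)
        rwa [← pow_mul, Nat.mul_comm] at hp
      have hpos : 0 < L (a ^ (2 * n)) := lt_of_le_of_ne h0 (Ne.symm hn0)
      rw [div_le_iff₀ hpos]
      have h2 := part2 a n
      have e : (algebraMap ℝ A ((T a) ^ 2) - a ^ 2) * a ^ (2 * n)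
          = ((T a) ^ 2) • (a ^ (2 * n)) - a ^ (2 * n + 2) := by
        rw [Algebra.smul_def, pow_add]; ring
      rw [e, map_sub, _root_.map_smul, smul_eq_mul] at h2
      linarith
    · positivity
  calc Real.sqrt (sSup (ratioSet L a)) ≤ Real.sqrt ((T a) ^ 2) := Real.sqrt_le_sqrt hsup
    _ = T a := by rw [Real.sqrt_sq hTa.le]
end

section
/- Let A be a unital commutative ℝ-algebra, (T_a)_{a∈A} a family of positive reals, and C the unital convex cone generated by {(T_a − a)^j (T_a + a)^k : a ∈ A, j,k ∈ ℕ₀}. If c ∈ A satisfies α(c) > 0 for every α in K = {α ∈ X(A) : |α(a)| ≤ T_a for all a ∈ A}, then c ∈ C. -/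
/-!
Suppose `c ∉ C`. Since `T a + a ∈ C`, the cone `C` is Archimedean with order unit `1`, so the
M. Riesz extension theorem gives a linear `L ≥ 0` on `C` with `L 1 = 1` and `L c ≤ 0`.
Positivity on `C` makes `L` positive semidefinite (Pólya: `x² + ε ∈ C`) and gives
`L ((w x)²) ≤ T w ² L (x²)`: by Cauchy–Schwarz the sequence `k ↦ L ((wᵏ x)²)` is log-convex, and
it grows at most like `T w ^ (2k)` because `T w ^ n - w ^ n ∈ C`. The normalized functionals
with these two properties form a set that is compact for pointwise convergence and stable under
`φ ↦ φ ((T b ± b) * ·)` up to scaling; splitting `φ` along `2 T b = (T b + b) + (T b - b)` shows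
that its extreme points are characters. An extreme point minimizing `φ ↦ φ c` is then a
character `ψ ∈ K` with `ψ c ≤ L c ≤ 0`.
-/

open Finset

lemma four_mul_choose_le (n j : ℕ) :
    4 * (n + 1) * (n.choose j : ℝ) ≤ (n + 2) * (n + 2).choose (j + 1) := by
  rcases lt_or_ge n j with hnj | hjn
  · rw [Nat.choose_eq_zero_of_lt hnj, Nat.cast_zero, mul_zero]; positivity
  obtain ⟨d, rfl⟩ := Nat.exists_eq_add_of_le hjn
  have h₁ : ((j + d + 2 : ℕ) : ℝ) * (j + d + 1).choose j =
      (j + d + 2).choose (j + 1) * (j + 1) := by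
    exact_mod_cast Nat.add_one_mul_choose_eq (j + d + 1) j
  have h₂ : ((j + d).choose j : ℝ) * (j + d + 1) = (j + d + 1).choose j * (d + 1) := by
    have := Nat.choose_mul_succ_eq (j + d) j
    rw [show j + d + 1 - j = d + 1 by omega] at this
    exact_mod_cast this
  push_cast at h₁ ⊢
  refine le_of_mul_le_mul_right ?_ (by positivity : (0 : ℝ) < (j + 1) * (d + 1))
  calc 4 * (j + d + 1) * ((j + d).choose j : ℝ) * ((j + 1) * (d + 1))
      = 4 * (j + 1) * (d + 1) ^ 2 * (j + d + 1).choose j := by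
        linear_combination (4 * (j + 1) * (d + 1) : ℝ) * h₂
    _ ≤ (j + d + 2) ^ 2 * (d + 1) * (j + d + 1).choose j := by
        gcongr ?_ * _
        nlinarith [sq_nonneg ((j : ℝ) - d)]
    _ = (j + d + 2) * (j + d + 2).choose (j + 1) * ((j + 1) * (d + 1)) := by
        linear_combination ((j + d + 2) * (d + 1) : ℝ) * h₁

lemma apply_one_le_of_logConvex_of_sq_le (H : ℕ → ℝ) {R C : ℝ} (hR : 0 < R)
    (hH : ∀ k, 0 ≤ H k) (hconv : ∀ k, H (k + 1) ^ 2 ≤ H k * H (k + 2))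
    (hbound : ∀ k, H k ^ 2 ≤ C * R ^ (2 * k)) : H 1 ≤ R * H 0 := by
  by_contra! h
  have h0 : 0 < H 0 := by
    refine (hH 0).lt_of_ne fun h0 => ?_
    have := hconv 0
    rw [zero_add, ← h0, zero_mul] at this
    rw [← h0, mul_zero] at h
    nlinarith
  set ρ := H 1 / H 0
  have hρ : R < ρ := (lt_div_iff₀ h0).mpr (by linarith)
  have hgrow : ∀ k, 0 < H k ∧ ρ * H k ≤ H (k + 1) := by
    intro k
    induction k with
    | zero => exact ⟨h0, (div_mul_cancel₀ _ h0.ne').le⟩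
    | succ k ih =>
      have hk : 0 < H (k + 1) := (mul_pos (hR.trans hρ) ih.1).trans_le ih.2
      refine ⟨hk, le_of_mul_le_mul_left ?_ ih.1⟩
      nlinarith [hconv k, mul_le_mul_of_nonneg_right ih.2 hk.le]
  have hgeom (k : ℕ) : ρ ^ k * H 0 ≤ H k := geom_le (hR.trans hρ).le k fun j _ => (hgrow j).2
  have hq : 1 < (ρ / R) ^ 2 := one_lt_pow₀ ((one_lt_div hR).mpr hρ) two_ne_zero
  obtain ⟨k, hk⟩ := pow_unbounded_of_one_lt (C / H 0 ^ 2) hq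
  have hsq : (ρ ^ k * H 0) ^ 2 ≤ C * R ^ (2 * k) :=
    (pow_le_pow_left₀ (by have := hR.trans hρ; positivity) (hgeom k) 2).trans (hbound k)
  rw [div_lt_iff₀ (by positivity)] at hk
  have hpow : ((ρ / R) ^ 2) ^ k * H 0 ^ 2 * R ^ (2 * k) = (ρ ^ k * H 0) ^ 2 := by
    rw [← pow_mul, div_pow, mul_comm 2 k, pow_mul, pow_mul]
    field_simp
  nlinarith [pow_pos hR (2 * k)]

section

variable {A : Type*} [Mul A]

structure PosBounded (T : A → ℝ) (φ : A → ℝ) : Prop where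
  mul_self_nonneg : ∀ x, 0 ≤ φ (x * x)
  mul_sq_le : ∀ w x, φ (w * x * (w * x)) ≤ T w ^ 2 * φ (x * x)

namespace PosBounded

variable {T : A → ℝ}

lemma smul {φ : A → ℝ} (hφ : PosBounded T φ) {r : ℝ} (hr : 0 ≤ r) : PosBounded T (r • φ) where
  mul_self_nonneg x := mul_nonneg hr (hφ.mul_self_nonneg x)
  mul_sq_le w x := by
    simp only [Pi.smul_apply, smul_eq_mul]
    nlinarith [hφ.mul_sq_le w x]

variable (T) in
lemma isClosed_setOf : IsClosed {φ : A → ℝ | PosBounded T φ} := by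
  have : {φ : A → ℝ | PosBounded T φ} = (⋂ x, {φ | 0 ≤ φ (x * x)}) ∩
      ⋂ w, ⋂ x, {φ | φ (w * x * (w * x)) ≤ T w ^ 2 * φ (x * x)} := by
    ext φ
    simp only [Set.mem_ofPred_eq, Set.mem_inter_iff, Set.mem_iInter]
    exact ⟨fun h => ⟨h.1, h.2⟩, fun h => ⟨h.1, h.2⟩⟩
  rw [this]
  exact (isClosed_iInter fun x => isClosed_le continuous_const (continuous_apply _)).inter
    (isClosed_iInter fun w => isClosed_iInter fun x =>
      isClosed_le (continuous_apply _) (continuous_const.mul (continuous_apply _)))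

end PosBounded

end

section

variable {A : Type*} [CommRing A] [Algebra ℝ A]

def monomialCone (u v : A) : PointedCone ℝ A :=
  PointedCone.hull ℝ {x | ∃ p q : ℕ, x = u ^ p * v ^ q}

lemma smul_monomial_mem_monomialCone (u v : A) {r : ℝ} (hr : 0 ≤ r) (p q : ℕ) :
    r • (u ^ p * v ^ q) ∈ monomialCone u v :=
  PointedCone.smul_mem _ hr (Submodule.subset_span ⟨p, q, rfl⟩)

lemma add_pow_sub_sub_pow_mem_monomialCone (u v : A) (n : ℕ) :
    (u + v) ^ n - (v - u) ^ n ∈ monomialCone u v := by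
  rw [sub_eq_neg_add v, add_pow, add_pow, ← sum_sub_distrib]
  refine Submodule.sum_mem _ fun m _ => ?_
  have hcoef : 0 ≤ (1 - (-1 : ℝ) ^ m) * n.choose m := by
    have : (-1 : ℝ) ^ m ≤ 1 := by rcases neg_one_pow_eq_or ℝ m with h | h <;> simp [h]
    exact mul_nonneg (by linarith) (Nat.cast_nonneg _)
  convert smul_monomial_mem_monomialCone u v hcoef m (n - m) using 1
  simp only [neg_pow u, Algebra.smul_def, map_mul, map_sub, map_pow, map_neg, map_one, map_natCast]
  ring

lemma algebraMap_sub_mul_mem_monomialCone {u v : A} {s l : ℝ} (hs : 0 < s)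
    (huv : u + v = algebraMap ℝ A s) (hl : s ^ 2 < 4 * l) :
    algebraMap ℝ A l - u * v ∈ monomialCone u v := by
  -- the coefficients of `l (u + v) ^ (n + 2) - s ^ 2 u v (u + v) ^ n` are nonnegative once
  -- `s ^ 2 ≤ (4 l - s ^ 2) (n + 1)`
  obtain ⟨n, hn⟩ := exists_nat_ge (s ^ 2 / (4 * l - s ^ 2))
  rw [div_le_iff₀ (by linarith)] at hn
  have hcoef : ∀ j, 0 ≤ l * (n + 2).choose (j + 1) - s ^ 2 * n.choose j := by
    intro j
    have hchoose := four_mul_choose_le n j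
    have hC : (0 : ℝ) ≤ (n + 2).choose (j + 1) := Nat.cast_nonneg _
    have hn1 : (0 : ℝ) < 4 * (n + 1) := by positivity
    refine sub_nonneg.mpr (le_of_mul_le_mul_left ?_ hn1)
    nlinarith [sq_nonneg s]
  have hl0 : 0 ≤ l := by nlinarith [sq_nonneg s]
  have key : algebraMap ℝ A (s ^ (n + 2)) * (algebraMap ℝ A l - u * v) =
      l • u ^ (n + 2) + l • v ^ (n + 2) + ∑ j ∈ range (n + 1),
        (l * (n + 2).choose (j + 1) - s ^ 2 * n.choose j) • (u ^ (j + 1) * v ^ (n + 1 - j)) := by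
    have hexp : algebraMap ℝ A (s ^ (n + 2)) * (algebraMap ℝ A l - u * v) =
        l • (u + v) ^ (n + 2) - s ^ 2 • (u * v * (u + v) ^ n) := by
      simp only [Algebra.smul_def, map_pow, ← huv]; ring
    have hsum : ∀ j ∈ range (n + 1),
        (l * (n + 2).choose (j + 1) - s ^ 2 * n.choose j) • (u ^ (j + 1) * v ^ (n + 1 - j)) =
          l • (u ^ (j + 1) * v ^ (n + 2 - (j + 1)) * (n + 2).choose (j + 1)) -
            s ^ 2 • (u * v * (u ^ j * v ^ (n - j) * n.choose j)) := by
      intro j hj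
      have : n + 1 - j = n - j + 1 := by have := mem_range.mp hj; omega
      rw [show n + 2 - (j + 1) = n + 1 - j by omega, this]
      simp only [Algebra.smul_def, map_sub, map_mul, map_natCast]; ring
    rw [hexp, sum_congr rfl hsum, sum_sub_distrib, ← smul_sum, ← smul_sum, ← mul_sum,
      add_pow, add_pow, sum_range_succ', sum_range_succ]
    simp only [Nat.choose_self, Nat.choose_zero_right, Nat.cast_one, mul_one, pow_zero, one_mul,
      Nat.sub_self, Nat.sub_zero, smul_add]
    abel
  have hmem : algebraMap ℝ A (s ^ (n + 2)) * (algebraMap ℝ A l - u * v) ∈ monomialCone u v := by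
    rw [key]
    refine add_mem (add_mem ?_ ?_) (Submodule.sum_mem _ fun j _ => ?_)
    · simpa using smul_monomial_mem_monomialCone u v hl0 (n + 2) 0
    · simpa using smul_monomial_mem_monomialCone u v hl0 0 (n + 2)
    · exact smul_monomial_mem_monomialCone u v (hcoef j) _ _
  have hs' : s ^ (n + 2) ≠ 0 := by positivity
  have := PointedCone.smul_mem _ (inv_nonneg.mpr (pow_nonneg hs.le (n + 2))) hmem
  rwa [← Algebra.smul_def, smul_smul, inv_mul_cancel₀ hs', one_smul] at this

def boxCone (T : A → ℝ) : PointedCone ℝ A :=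
  PointedCone.hull ℝ
    {g | ∃ (a : A) (p q : ℕ), g = (algebraMap ℝ A (T a) - a) ^ p * (algebraMap ℝ A (T a) + a) ^ q}

section boxCone

variable (T : A → ℝ)

lemma monomialCone_le_boxCone (a : A) :
    monomialCone (algebraMap ℝ A (T a) - a) (algebraMap ℝ A (T a) + a) ≤ boxCone T :=
  Submodule.span_mono fun _ ⟨p, q, h⟩ => ⟨a, p, q, h⟩

lemma one_mem_boxCone : (1 : A) ∈ boxCone T :=
  Submodule.subset_span ⟨0, 0, 0, by simp⟩

lemma algebraMap_add_mem_boxCone (a : A) : algebraMap ℝ A (T a) + a ∈ boxCone T :=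
  Submodule.subset_span ⟨a, 0, 1, by simp⟩

lemma algebraMap_pow_sub_pow_mem_boxCone (w : A) (n : ℕ) :
    algebraMap ℝ A (T w ^ n) - w ^ n ∈ boxCone T := by
  have h := PointedCone.smul_mem _ (by positivity : (0 : ℝ) ≤ (2 ^ n)⁻¹)
    (monomialCone_le_boxCone T w (add_pow_sub_sub_pow_mem_monomialCone _ _ n))
  convert h using 1
  rw [show algebraMap ℝ A (T w) - w + (algebraMap ℝ A (T w) + w) =
      (2 : ℝ) • algebraMap ℝ A (T w) by module,
    show algebraMap ℝ A (T w) + w - (algebraMap ℝ A (T w) - w) = (2 : ℝ) • w by module,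
    smul_pow, smul_pow, ← smul_sub, smul_smul, inv_mul_cancel₀ (by positivity), one_smul, map_pow]

variable {T} in
lemma mul_self_add_algebraMap_mem_boxCone {x : A} (hx : 0 < T x) {ε : ℝ} (hε : 0 < ε) :
    x * x + algebraMap ℝ A ε ∈ boxCone T := by
  have := monomialCone_le_boxCone T x <| algebraMap_sub_mul_mem_monomialCone
    (s := 2 * T x) (l := T x ^ 2 + ε) (by positivity) (by rw [map_mul, map_ofNat]; ring)
    (by nlinarith)
  convert this using 1
  rw [map_add, map_pow]; ring

end boxCone

lemma map_mul_sq_le_mul (L : A →ₗ[ℝ] ℝ) (hL : ∀ x, 0 ≤ L (x * x)) (x y : A) :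
    L (x * y) ^ 2 ≤ L (x * x) * L (y * y) := by
  have hquad : ∀ r : ℝ, 0 ≤ L (y * y) * (r * r) + 2 * L (x * y) * r + L (x * x) := fun r => by
    have hexp : (x + r • y) * (x + r • y) = x * x + (2 * r) • (x * y) + (r * r) • (y * y) := by
      simp only [Algebra.smul_def, map_mul, map_ofNat]; ring
    have := hL (x + r • y)
    rw [hexp, map_add, map_add, map_smul, map_smul, smul_eq_mul, smul_eq_mul] at this
    linarith
  have := discrim_le_zero hquad
  rw [discrim] at this
  linarith

lemma eq_zero_of_map_one_eq_zero {L : A →ₗ[ℝ] ℝ} (hL : ∀ x, 0 ≤ L (x * x)) (h1 : L 1 = 0) :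
    L = 0 := by
  ext x
  have := map_mul_sq_le_mul L hL x 1
  rw [mul_one, mul_one, h1, mul_zero] at this
  exact pow_eq_zero_iff two_ne_zero |>.mp (le_antisymm this (sq_nonneg _))

lemma map_mul_sq_le_of_moment_le (M : A →ₗ[ℝ] ℝ) (hM : ∀ x, 0 ≤ M (x * x)) {w : A} {t : ℝ}
    (ht : 0 < t) (hmom : ∀ k, M (w ^ (2 * k)) ≤ t ^ (2 * k) * M 1) {e : A}
    (he : ∀ x, 0 ≤ M (e * (x * x))) (x : A) :
    M (e * (w * x * (w * x))) ≤ t ^ 2 * M (e * (x * x)) := by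
  set N := M ∘ₗ LinearMap.mulLeft ℝ e
  have hN : ∀ y, 0 ≤ N (y * y) := he
  have hconv (k : ℕ) : N (w ^ (k + 1) * x * (w ^ (k + 1) * x)) ^ 2 ≤
      N (w ^ k * x * (w ^ k * x)) * N (w ^ (k + 2) * x * (w ^ (k + 2) * x)) := by
    convert map_mul_sq_le_mul N hN (w ^ k * x) (w ^ (k + 2) * x) using 3; ring
  have hbound (k : ℕ) : N (w ^ k * x * (w ^ k * x)) ^ 2 ≤
      M (e * (x * x) * (e * (x * x))) * M 1 * (t ^ 2) ^ (2 * k) := by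
    have hcs := map_mul_sq_le_mul M hM (e * (x * x)) (w ^ (2 * k))
    calc N (w ^ k * x * (w ^ k * x)) ^ 2 = M (e * (x * x) * w ^ (2 * k)) ^ 2 := by
          simp only [N, LinearMap.comp_apply, LinearMap.mulLeft_apply]; ring_nf
      _ ≤ M (e * (x * x) * (e * (x * x))) * M (w ^ (2 * (2 * k))) := by
          rwa [← pow_add, ← two_mul] at hcs
      _ ≤ M (e * (x * x) * (e * (x * x))) * (t ^ (2 * (2 * k)) * M 1) :=
          mul_le_mul_of_nonneg_left (hmom (2 * k)) (hM _)
      _ = _ := by ring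
  simpa [N] using apply_one_le_of_logConvex_of_sq_le _ (pow_pos ht 2) (fun k => hN _) hconv hbound

namespace PosBounded

variable {T : A → ℝ}

lemma map_pow_le {M : A →ₗ[ℝ] ℝ} (hM : PosBounded T M) (w : A) (k : ℕ) :
    M (w ^ (2 * k)) ≤ T w ^ (2 * k) * M 1 := by
  induction k with
  | zero => simp
  | succ k ih =>
    calc M (w ^ (2 * (k + 1))) = M (w * w ^ k * (w * w ^ k)) := by ring_nf
      _ ≤ T w ^ 2 * M (w ^ (2 * k)) := by
        simpa only [← pow_add, ← two_mul] using hM.mul_sq_le w (w ^ k)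
      _ ≤ T w ^ 2 * (T w ^ (2 * k) * M 1) := mul_le_mul_of_nonneg_left ih (sq_nonneg _)
      _ = T w ^ (2 * (k + 1)) * M 1 := by ring

lemma comp_mulLeft (hT : ∀ a, 0 < T a) {M : A →ₗ[ℝ] ℝ} (hM : PosBounded T M) {b e : A}
    (he : e = algebraMap ℝ A (T b) + b ∨ e = algebraMap ℝ A (T b) - b) :
    PosBounded T (M ∘ₗ LinearMap.mulLeft ℝ e) := by
  have hnonneg (x : A) : 0 ≤ M (e * (x * x)) := by
    -- `2 T b e x² = (e x)² + (T b ² x² - (b x)²)`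
    have hid : algebraMap ℝ A (2 * T b) * (e * (x * x)) =
        e * x * (e * x) + (algebraMap ℝ A (T b ^ 2) * (x * x) - b * x * (b * x)) := by
      rcases he with rfl | rfl <;> simp only [map_mul, map_pow, map_ofNat] <;> ring
    have := congrArg M hid
    simp only [← Algebra.smul_def, map_add, map_sub, map_smul, smul_eq_mul] at this
    have := hM.mul_self_nonneg (e * x)
    have := hM.mul_sq_le b x
    nlinarith [hT b]
  refine ⟨hnonneg, fun w x => ?_⟩
  exact map_mul_sq_le_of_moment_le M hM.mul_self_nonneg (hT w) (hM.map_pow_le w) hnonneg x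

lemma abs_apply_le {L : A →ₗ[ℝ] ℝ} (hL : PosBounded T L) (hL1 : L 1 = 1) {a : A}
    (ha : 0 ≤ T a) : |L a| ≤ T a := by
  have h₁ := map_mul_sq_le_mul L hL.mul_self_nonneg a 1
  have h₂ := hL.mul_sq_le a 1
  simp only [mul_one, hL1] at h₁ h₂
  exact abs_le_of_sq_le_sq (by linarith) ha

end PosBounded

lemma posBounded_of_nonneg {T : A → ℝ} (hT : ∀ a, 0 < T a) {L : A →ₗ[ℝ] ℝ}
    (hL : ∀ x ∈ boxCone T, 0 ≤ L x) : PosBounded T L := by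
  have hL1 : 0 ≤ L 1 := hL 1 (one_mem_boxCone T)
  have hnonneg (x : A) : 0 ≤ L (x * x) := by
    refine le_of_forall_pos_le_add fun δ hδ => ?_
    have hε : 0 < δ / (L 1 + 1) := by positivity
    have h := hL _ (mul_self_add_algebraMap_mem_boxCone (hT x) hε)
    rw [map_add, Algebra.algebraMap_eq_smul_one, map_smul, smul_eq_mul] at h
    have : δ / (L 1 + 1) * L 1 ≤ δ := by
      rw [div_mul_eq_mul_div, div_le_iff₀ (by positivity)]; nlinarith
    linarith
  have hmom (w : A) (k : ℕ) : L (w ^ (2 * k)) ≤ T w ^ (2 * k) * L 1 := by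
    have h := hL _ (algebraMap_pow_sub_pow_mem_boxCone T w (2 * k))
    rw [map_sub, Algebra.algebraMap_eq_smul_one, map_smul, smul_eq_mul] at h
    linarith
  refine ⟨hnonneg, fun w x => ?_⟩
  simpa using
    map_mul_sq_le_of_moment_le L hnonneg (hT w) (hmom w) (e := 1) (by simpa using hnonneg) x

def stateSpace (T : A → ℝ) : Set (A → ℝ) :=
  Set.range ((⇑) : (A →ₗ[ℝ] ℝ) → A → ℝ) ∩ {φ | φ 1 = 1} ∩ {φ | PosBounded T φ}

section stateSpace

variable {T : A → ℝ}

lemma isCompact_stateSpace (hT : ∀ a, 0 ≤ T a) : IsCompact (stateSpace T) := by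
  refine (isCompact_univ_pi fun a => isCompact_Icc (a := -T a) (b := T a)).of_isClosed_subset
    (((LinearMap.isClosed_range_coe A ℝ (RingHom.id ℝ)).inter
      (isClosed_setOfPred_map_one A ℝ)).inter (PosBounded.isClosed_setOf T)) ?_
  rintro _ ⟨⟨⟨L, rfl⟩, hL1⟩, hL⟩ a -
  exact abs_le.mp (hL.abs_apply_le hL1 (hT a))

lemma eq_smul_of_add_eq_of_mem_extremePoints {φ : A → ℝ}
    (hφ : φ ∈ (stateSpace T).extremePoints ℝ) {ψ₁ ψ₂ : A →ₗ[ℝ] ℝ} (h₁ : PosBounded T ψ₁)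
    (h₂ : PosBounded T ψ₂) (hsum : ⇑ψ₁ + ⇑ψ₂ = φ) :
    ⇑ψ₁ = ψ₁ 1 • φ := by
  have hsum1 : ψ₁ 1 + ψ₂ 1 = 1 := by rw [← hφ.1.1.2, ← hsum]; rfl
  have hψ₁ : 0 ≤ ψ₁ 1 := by simpa using h₁.mul_self_nonneg 1
  have hψ₂ : 0 ≤ ψ₂ 1 := by simpa using h₂.mul_self_nonneg 1
  rcases hψ₁.eq_or_lt with h | hψ₁
  · rw [← h, zero_smul, LinearMap.coe_zero_iff]
    exact eq_zero_of_map_one_eq_zero h₁.mul_self_nonneg h.symm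
  rcases hψ₂.eq_or_lt with h | hψ₂
  · rw [(LinearMap.coe_zero_iff ψ₂).mpr (eq_zero_of_map_one_eq_zero h₂.mul_self_nonneg h.symm),
      add_zero] at hsum
    rw [← h, add_zero] at hsum1
    rw [hsum1, one_smul, hsum]
  have hmem {ψ : A →ₗ[ℝ] ℝ} (h : PosBounded T ψ) (hψ : 0 < ψ 1) : (ψ 1)⁻¹ • ⇑ψ ∈ stateSpace T :=
    ⟨⟨⟨(ψ 1)⁻¹ • ψ, rfl⟩, inv_mul_cancel₀ hψ.ne'⟩, h.smul (inv_nonneg.mpr hψ.le)⟩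
  have hseg : φ ∈ openSegment ℝ ((ψ₁ 1)⁻¹ • ⇑ψ₁) ((ψ₂ 1)⁻¹ • ⇑ψ₂) :=
    ⟨ψ₁ 1, ψ₂ 1, hψ₁, hψ₂, hsum1, by
      rw [smul_smul, smul_smul, mul_inv_cancel₀ hψ₁.ne', mul_inv_cancel₀ hψ₂.ne', one_smul,
        one_smul, hsum]⟩
  rw [← hφ.2 (hmem h₁ hψ₁) (hmem h₂ hψ₂) hseg, smul_smul, mul_inv_cancel₀ hψ₁.ne', one_smul]

lemma map_mul_of_mem_extremePoints (hT : ∀ a, 0 < T a) {φ : A → ℝ}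
    (hφ : φ ∈ (stateSpace T).extremePoints ℝ) (b x : A) : φ (b * x) = φ b * φ x := by
  obtain ⟨⟨⟨L, rfl⟩, hL1 : L 1 = 1⟩, hL⟩ := hφ.1
  set t := T b
  have ht : 0 < t := hT b
  have hplus (y : A) : L ((algebraMap ℝ A t + b) * y) = t * L y + L (b * y) := by
    rw [add_mul, map_add, ← Algebra.smul_def, map_smul, smul_eq_mul]
  have hminus (y : A) : L ((algebraMap ℝ A t - b) * y) = t * L y - L (b * y) := by
    rw [sub_mul, map_sub, ← Algebra.smul_def, map_smul, smul_eq_mul]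
  let ψ (e : A) : A →ₗ[ℝ] ℝ := (2 * t)⁻¹ • (L ∘ₗ LinearMap.mulLeft ℝ e)
  have hψ (e : A) (he : e = algebraMap ℝ A t + b ∨ e = algebraMap ℝ A t - b) :
      PosBounded T (ψ e) :=
    (hL.comp_mulLeft hT he).smul (by positivity)
  have hsum : ⇑(ψ (algebraMap ℝ A t + b)) + ⇑(ψ (algebraMap ℝ A t - b)) = L := by
    ext y
    simp only [ψ, Pi.add_apply, LinearMap.smul_apply, LinearMap.comp_apply,
      LinearMap.mulLeft_apply, smul_eq_mul, hplus, hminus]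
    field_simp
    ring
  have := congrFun (eq_smul_of_add_eq_of_mem_extremePoints hφ (hψ _ (Or.inl rfl))
    (hψ _ (Or.inr rfl)) hsum) x
  simp only [ψ, Pi.smul_apply, LinearMap.smul_apply, LinearMap.comp_apply,
    LinearMap.mulLeft_apply, smul_eq_mul, hplus, mul_one] at this
  have h1 : L (algebraMap ℝ A t + b) = t + L b := by simpa [hL1] using hplus 1
  rw [h1] at this
  field_simp at this
  linarith

lemma exists_algHom_apply_le (hT : ∀ a, 0 < T a) {L : A →ₗ[ℝ] ℝ} (hL1 : L 1 = 1)
    (hL : PosBounded T L) (c : A) : ∃ ψ : A →ₐ[ℝ] ℝ, (∀ a, |ψ a| ≤ T a) ∧ ψ c ≤ L c := by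
  have hcompact := isCompact_stateSpace fun a => (hT a).le
  have hLmem : ⇑L ∈ stateSpace T := ⟨⟨⟨L, rfl⟩, hL1⟩, hL⟩
  let l : (A → ℝ) →L[ℝ] ℝ := -ContinuousLinearMap.proj c
  -- the face where `φ ↦ φ c` is minimal is exposed, so its extreme points are extreme points of
  -- `stateSpace T`
  have hexp : IsExposed ℝ (stateSpace T) {φ ∈ stateSpace T | ∀ ψ ∈ stateSpace T, l ψ ≤ l φ} :=
    fun _ => ⟨l, rfl⟩
  obtain ⟨φ₀, hφ₀, hmax⟩ := hcompact.exists_isMaxOn ⟨_, hLmem⟩ l.continuous.continuousOn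
  obtain ⟨φ, hφ⟩ :=
    (hexp.isCompact hcompact).extremePoints_nonempty ⟨φ₀, hφ₀, fun ψ hψ => hmax hψ⟩
  have hφext := hexp.isExtreme.extremePoints_subset_extremePoints hφ
  obtain ⟨⟨⟨M, rfl⟩, hM1⟩, hM⟩ := hφext.1
  refine ⟨AlgHom.ofLinearMap M hM1 (map_mul_of_mem_extremePoints hT hφext),
    fun a => hM.abs_apply_le hM1 (hT a).le, ?_⟩
  simpa [l] using hφ.1.2 _ hLmem

end stateSpace

lemma PointedCone.exists_nonneg_map_eq_one {E : Type*} [AddCommGroup E] [Module ℝ E]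
    (s : PointedCone ℝ E) {u : E} (hu : -u ∉ s) (hs : ∀ y, ∃ r : ℝ, r • u + y ∈ s) :
    ∃ L : E →ₗ[ℝ] ℝ, L u = 1 ∧ ∀ x ∈ s, 0 ≤ L x := by
  have hu0 : u ≠ 0 := by rintro rfl; exact hu (by simp)
  let f : E →ₗ.[ℝ] ℝ := LinearPMap.mkSpanSingleton u 1 hu0
  have hnonneg (x : f.domain) (hxs : (x : E) ∈ s) : 0 ≤ f x := by
    obtain ⟨x, hx⟩ := x
    obtain ⟨r, rfl⟩ := Submodule.mem_span_singleton.mp hx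
    simp only [f, LinearPMap.mkSpanSingleton'_apply, RingHom.id_apply, smul_eq_mul, mul_one]
    by_contra! hr
    apply hu
    have := s.smul_mem (inv_nonneg.mpr (neg_nonneg.mpr hr.le)) hxs
    rwa [smul_smul, inv_neg, neg_mul, inv_mul_cancel₀ hr.ne, neg_smul, one_smul] at this
  have hdense (y : E) : ∃ x : f.domain, (x : E) + y ∈ s := by
    obtain ⟨r, hr⟩ := hs y
    exact ⟨⟨r • u, Submodule.smul_mem _ r (Submodule.mem_span_singleton_self u)⟩, hr⟩
  obtain ⟨L, hLf, hLs⟩ := riesz_extension s f hnonneg hdense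
  exact ⟨L, (hLf _).trans (LinearPMap.mkSpanSingleton_apply ℝ ℝ hu0 1), hLs⟩

lemma exists_nonneg_map_nonpos_of_notMem_boxCone {T : A → ℝ} {c : A} (hTc : 0 ≤ T c)
    (hc : c ∉ boxCone T) :
    ∃ L : A →ₗ[ℝ] ℝ, L 1 = 1 ∧ (∀ x ∈ boxCone T, 0 ≤ L x) ∧ L c ≤ 0 := by
  set s := boxCone T ⊔ PointedCone.hull ℝ {-c}
  have hneg : -1 ∉ s := by
    intro h
    obtain ⟨y, hy, z, hz, hyz⟩ := Submodule.mem_sup.mp h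
    obtain ⟨r, rfl⟩ := Submodule.mem_span_singleton.mp hz
    have hr : 0 < 1 + T c * r := by linarith [mul_nonneg hTc r.2]
    -- `y = r c - 1`, hence `(1 + T c r) c = (T c + c) + T c y`
    have key : (1 + T c * r)⁻¹ • (algebraMap ℝ A (T c) + c + T c • y) = c := by
      rw [eq_sub_of_add_eq hyz, ← Nonneg.coe_smul, Algebra.algebraMap_eq_smul_one,
        show T c • (1 : A) + c + T c • (-1 - (r : ℝ) • -c) = (1 + T c * r) • c by module,
        smul_smul, inv_mul_cancel₀ hr.ne', one_smul]
    exact hc (key ▸ (boxCone T).smul_mem (inv_nonneg.mpr hr.le)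
      (add_mem (algebraMap_add_mem_boxCone T c) ((boxCone T).smul_mem hTc hy)))
  have harch (y : A) : ∃ r : ℝ, r • (1 : A) + y ∈ s :=
    ⟨T y, le_sup_left (a := boxCone T) (by
      simpa [Algebra.algebraMap_eq_smul_one] using algebraMap_add_mem_boxCone T y)⟩
  obtain ⟨L, hL1, hL⟩ := s.exists_nonneg_map_eq_one hneg harch
  refine ⟨L, hL1, fun x hx => hL x (le_sup_left (a := boxCone T) hx), ?_⟩
  have := hL (-c) (le_sup_right (a := boxCone T) (Submodule.subset_span rfl))
  rw [map_neg] at this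
  linarith

end

variable {A : Type*} [CommRing A] [Algebra ℝ A]

theorem stmt8_general (T : A → ℝ) (hT : ∀ a : A, 0 < T a) (c : A)
    (hc : ∀ ψ : A →ₐ[ℝ] ℝ, (∀ a : A, |ψ a| ≤ T a) → 0 < ψ c) :
    ∃ (k : ℕ) (coef : Fin k → ℝ) (g : Fin k → A),
      (∀ i, 0 ≤ coef i) ∧
      (∀ i, ∃ (a : A) (p q : ℕ),
        g i = (algebraMap ℝ A (T a) - a) ^ p * (algebraMap ℝ A (T a) + a) ^ q) ∧
      c = ∑ i, coef i • g i := by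
  have hmem : c ∈ boxCone T := by
    by_contra hnot
    obtain ⟨L, hL1, hL, hLc⟩ := exists_nonneg_map_nonpos_of_notMem_boxCone (hT c).le hnot
    obtain ⟨ψ, hψT, hψc⟩ := exists_algHom_apply_le hT hL1 (posBounded_of_nonneg hT hL) c
    exact (hc ψ hψT).not_ge (hψc.trans hLc)
  obtain ⟨k, coef, g, hsum⟩ := Submodule.mem_span_set'.mp hmem
  exact ⟨k, fun i => coef i, fun i => g i, fun i => (coef i).2, fun i => (g i).2, hsum.symm⟩

theorem stmt8 (hX : Nonempty (A →ₐ[ℝ] ℝ)) (T : A → ℝ) (hT : ∀ a : A, 0 < T a) (c : A)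
    (hc : ∀ ψ : A →ₐ[ℝ] ℝ, (∀ a : A, |ψ a| ≤ T a) → 0 < ψ c) :
    ∃ (k : ℕ) (coef : Fin k → ℝ) (g : Fin k → A),
      (∀ i, 0 ≤ coef i) ∧
      (∀ i, ∃ (a : A) (p q : ℕ),
        g i = (algebraMap ℝ A (T a) - a) ^ p * (algebraMap ℝ A (T a) + a) ^ q) ∧
      c = ∑ i, coef i • g i :=
  stmt8_general T hT c hc
end

section
/- Let L be a positive semidefinite linear functional on a unital commutative ℝ-algebra A with L(1)=1 and v_L(a) < ∞ for all a ∈ A. Then v_L is a seminorm: v_L(a+b) ≤ v_L(a) + v_L(b) and v_L(αa) = |α|·v_L(a) for all a, b ∈ A and α ∈ ℝ. -/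
open MeasureTheory

variable {A : Type*} [CommRing A] [Algebra ℝ A]

/-- The set of (underlying functions of) ℝ-algebra homomorphisms `A → ℝ`,
as a subset of `A → ℝ` with the topology of pointwise convergence. -/
def charSet (A : Type*) [CommRing A] [Algebra ℝ A] : Set (A → ℝ) :=
  {φ | ∃ ψ : A →ₐ[ℝ] ℝ, ⇑ψ = φ}


lemma cauchy_schwarz (L : A →ₗ[ℝ] ℝ) (hpsd : ∀ x : A, 0 ≤ L (x ^ 2)) (x y : A) :
    (L (x * y)) ^ 2 ≤ L (x ^ 2) * L (y ^ 2) := by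
  have key : ∀ t : ℝ, 0 ≤ L (y ^ 2) * (t * t) + 2 * L (x * y) * t + L (x ^ 2) := by
    intro t
    have h := hpsd (x + t • y)
    have hx : (x + t • y) ^ 2 = (t ^ 2) • (y ^ 2) + (2 * t) • (x * y) + x ^ 2 := by
      simp only [Algebra.smul_def, map_mul, map_pow, map_ofNat]
      ring
    rw [hx, map_add, map_add, _root_.map_smul, _root_.map_smul] at h
    simp only [smul_eq_mul] at h
    nlinarith [h]
  have hd := discrim_le_zero key
  rw [discrim] at hd
  nlinarith [hd]

section
variable (L : A →ₗ[ℝ] ℝ) (hpsd : ∀ x : A, 0 ≤ L (x ^ 2)) (h1 : L 1 = 1)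

include hpsd in
lemma m_nonneg (a : A) (n : ℕ) : 0 ≤ L (a ^ (2 * n)) := by
  rw [mul_comm, pow_mul]; exact hpsd _

include h1 in
lemma mem0 (a : A) : L (a ^ 2) ∈ ratioSet L a := by
  refine ⟨0, ?_, ?_⟩ <;> simp [h1]

include hpsd h1 in
lemma sSup_ratio_nonneg (a : A) (hfin : BddAbove (ratioSet L a)) :
    0 ≤ sSup (ratioSet L a) :=
  le_trans (hpsd a) (le_csSup hfin (mem0 L h1 a))

include hpsd h1 in
lemma even_bound (a : A) (hfin : BddAbove (ratioSet L a)) (n : ℕ) :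
    L (a ^ (2 * n)) ≤ (sSup (ratioSet L a)) ^ n := by
  set s := sSup (ratioSet L a) with hs
  have hs0 : 0 ≤ s := sSup_ratio_nonneg L hpsd h1 a hfin
  induction n with
  | zero => simp [h1]
  | succ n ih =>
    by_cases hz : L (a ^ (2 * n)) = 0
    · -- then L (a ^ (2*n+2)) = 0 by CS
      have hcs := cauchy_schwarz L hpsd (a ^ n) (a ^ (n + 2))
      have e1 : a ^ n * a ^ (n + 2) = a ^ (2 * (n + 1)) := by ring
      have e2 : (a ^ n) ^ 2 = a ^ (2 * n) := by ring
      have e3 : (a ^ (n + 2)) ^ 2 = a ^ (2 * (n + 2)) := by ring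
      rw [e1, e2, e3, hz, zero_mul] at hcs
      have : L (a ^ (2 * (n + 1))) = 0 := by
        have := sq_nonneg (L (a ^ (2 * (n + 1))))
        nlinarith
      rw [this]
      positivity
    · have hmem : L (a ^ (2 * n + 2)) / L (a ^ (2 * n)) ∈ ratioSet L a := ⟨n, hz, rfl⟩
      have hle : L (a ^ (2 * n + 2)) / L (a ^ (2 * n)) ≤ s := le_csSup hfin hmem
      have hpos : 0 < L (a ^ (2 * n)) := lt_of_le_of_ne (m_nonneg L hpsd a n) (Ne.symm hz)
      have : L (a ^ (2 * n + 2)) ≤ s * L (a ^ (2 * n)) := by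
        rw [div_le_iff₀ hpos] at hle; linarith
      have e4 : 2 * (n + 1) = 2 * n + 2 := by ring
      rw [e4]
      calc L (a ^ (2 * n + 2)) ≤ s * L (a ^ (2 * n)) := this
        _ ≤ s * s ^ n := by
          exact mul_le_mul_of_nonneg_left ih hs0
        _ = s ^ (n + 1) := by ring
end

lemma abs_le_of_sq_le_sq'' {x y : ℝ} (h : x ^ 2 ≤ y ^ 2) (hy : 0 ≤ y) : |x| ≤ y := by
  have := Real.sqrt_le_sqrt h
  rwa [Real.sqrt_sq_eq_abs, Real.sqrt_sq hy] at this

section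
variable (L : A →ₗ[ℝ] ℝ) (hpsd : ∀ x : A, 0 ≤ L (x ^ 2)) (h1 : L 1 = 1)

include hpsd h1 in
lemma abs_pow_bound (a : A) (hfin : BddAbove (ratioSet L a)) (n : ℕ) :
    |L (a ^ n)| ≤ (vL L a) ^ n := by
  have hs0 : 0 ≤ sSup (ratioSet L a) := sSup_ratio_nonneg L hpsd h1 a hfin
  have hv0 : 0 ≤ vL L a := Real.sqrt_nonneg _
  have hv2 : (vL L a) ^ 2 = sSup (ratioSet L a) := Real.sq_sqrt hs0
  rcases Nat.even_or_odd n with ⟨k, hk⟩ | ⟨k, hk⟩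
  · subst hk
    have h2k : k + k = 2 * k := by ring
    rw [h2k, abs_of_nonneg (m_nonneg L hpsd a k)]
    calc L (a ^ (2 * k)) ≤ (sSup (ratioSet L a)) ^ k := even_bound L hpsd h1 a hfin k
      _ = ((vL L a) ^ 2) ^ k := by rw [hv2]
      _ = (vL L a) ^ (2 * k) := by ring
  · subst hk
    apply abs_le_of_sq_le_sq'' _ (by positivity)
    have hcs := cauchy_schwarz L hpsd (a ^ k) (a ^ (k + 1))
    have e1 : a ^ k * a ^ (k + 1) = a ^ (2 * k + 1) := by ring
    have e2 : (a ^ k) ^ 2 = a ^ (2 * k) := by ring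
    have e3 : (a ^ (k + 1)) ^ 2 = a ^ (2 * (k + 1)) := by ring
    rw [e1, e2, e3] at hcs
    calc (L (a ^ (2 * k + 1))) ^ 2 ≤ L (a ^ (2 * k)) * L (a ^ (2 * (k + 1))) := hcs
      _ ≤ (sSup (ratioSet L a)) ^ k * (sSup (ratioSet L a)) ^ (k + 1) := by
          apply mul_le_mul (even_bound L hpsd h1 a hfin k) (even_bound L hpsd h1 a hfin (k+1))
            (m_nonneg L hpsd a (k+1)) (by positivity)
      _ = ((vL L a) ^ (2 * k + 1)) ^ 2 := by rw [← hv2]; ring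
end

section
variable (L : A →ₗ[ℝ] ℝ) (hpsd : ∀ x : A, 0 ≤ L (x ^ 2)) (h1 : L 1 = 1)

include hpsd h1 in
lemma vL_le_of_bound (a : A) (c : ℝ) (hc : 0 ≤ c)
    (hb : ∀ n : ℕ, |L (a ^ n)| ≤ c ^ n) : vL L a ≤ c := by
  have hsle : sSup (ratioSet L a) ≤ c ^ 2 := by
    apply csSup_le ⟨L (a ^ 2), mem0 L h1 a⟩
    rintro r ⟨n, hz, rfl⟩
    set r := L (a ^ (2 * n + 2)) / L (a ^ (2 * n)) with hr
    by_contra hgt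
    push_neg at hgt
    have hmn : 0 < L (a ^ (2 * n)) := lt_of_le_of_ne (m_nonneg L hpsd a n) (Ne.symm hz)
    have hr0 : 0 < r := lt_of_le_of_lt (by positivity) hgt
    -- key chain: ∀ k, L(a^(2*(n+k))) > 0 ∧ r * L(a^(2*(n+k))) ≤ L(a^(2*(n+k+1))) ∧ r^k * L(a^(2*n)) ≤ L(a^(2*(n+k)))
    have chain : ∀ k : ℕ, 0 < L (a ^ (2 * (n + k))) ∧
        r * L (a ^ (2 * (n + k))) ≤ L (a ^ (2 * (n + k + 1))) ∧
        r ^ k * L (a ^ (2 * n)) ≤ L (a ^ (2 * (n + k))) := by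
      intro k
      induction k with
      | zero =>
        refine ⟨by simpa using hmn, ?_, by simp⟩
        have : r * L (a ^ (2 * n)) = L (a ^ (2 * n + 2)) := by
          rw [hr]; field_simp
        simp only [Nat.add_zero]
        rw [this]
        have e : 2 * (n + 1) = 2 * n + 2 := by ring
        rw [e]
      | succ k ih =>
        obtain ⟨hpos, hstep, hgeo⟩ := ih
        have hpos' : 0 < L (a ^ (2 * (n + k + 1))) :=
          lt_of_lt_of_le (by positivity) hstep
        refine ⟨by simpa [Nat.add_assoc] using hpos', ?_, ?_⟩
        · -- CS: L(a^(2(n+k)+2))^2 ≤ L(a^(2(n+k))) * L(a^(2(n+k)+4))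
          have hcs := cauchy_schwarz L hpsd (a ^ (n + k)) (a ^ (n + k + 2))
          have e1 : a ^ (n + k) * a ^ (n + k + 2) = a ^ (2 * (n + k + 1)) := by ring
          have e2 : (a ^ (n + k)) ^ 2 = a ^ (2 * (n + k)) := by ring
          have e3 : (a ^ (n + k + 2)) ^ 2 = a ^ (2 * (n + k + 1 + 1)) := by ring
          rw [e1, e2, e3] at hcs
          show r * L (a ^ (2 * (n + k + 1))) ≤ L (a ^ (2 * (n + k + 1 + 1)))
          nlinarith [hpos, hpos', hstep, hr0.le, hcs,
            mul_le_mul_of_nonneg_left hstep hpos'.le]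
        · calc r ^ (k + 1) * L (a ^ (2 * n)) = r * (r ^ k * L (a ^ (2 * n))) := by ring
            _ ≤ r * L (a ^ (2 * (n + k))) := by
                exact mul_le_mul_of_nonneg_left hgeo hr0.le
            _ ≤ L (a ^ (2 * (n + k + 1))) := hstep
    -- now derive contradiction
    have hub : ∀ k : ℕ, r ^ k * L (a ^ (2 * n)) ≤ c ^ (2 * (n + k)) := by
      intro k
      refine le_trans (chain k).2.2 ?_
      have := hb (2 * (n + k))
      calc L (a ^ (2 * (n + k))) ≤ |L (a ^ (2 * (n + k)))| := le_abs_self _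
        _ ≤ c ^ (2 * (n + k)) := this
    by_cases hc0 : c = 0
    · have := hub 1
      have h1pos : 0 < r ^ 1 * L (a ^ (2 * n)) := by positivity
      rw [hc0, zero_pow (by omega : 2 * (n + 1) ≠ 0)] at this
      nlinarith [h1pos, this]
    · have hcpos : 0 < c := lt_of_le_of_ne hc (Ne.symm hc0)
      have hone : 1 < r / c ^ 2 := by
        rw [lt_div_iff₀ (by positivity)]; linarith
      obtain ⟨k, hk⟩ := pow_unbounded_of_one_lt (c ^ (2 * n) / L (a ^ (2 * n))) hone
      have := hub k
      have hexp : c ^ (2 * (n + k)) = c ^ (2 * n) * (c ^ 2) ^ k := by ring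
      rw [hexp] at this
      rw [div_pow, div_lt_div_iff₀ hmn (by positivity : (0:ℝ) < (c ^ 2) ^ k)] at hk
      linarith [this, hk]
  have hfin := Real.sqrt_le_sqrt hsle
  rwa [Real.sqrt_sq hc] at hfin
end

section
variable (L : A →ₗ[ℝ] ℝ) (hpsd : ∀ x : A, 0 ≤ L (x ^ 2)) (h1 : L 1 = 1)
  (hfin : ∀ a : A, BddAbove (ratioSet L a))

include hpsd h1 hfin in
lemma mixed_bound (a b : A) (k m : ℕ) :
    |L (a ^ k * b ^ m)| ≤ vL L a ^ k * vL L b ^ m := by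
  have hva : 0 ≤ vL L a := Real.sqrt_nonneg _
  have hvb : 0 ≤ vL L b := Real.sqrt_nonneg _
  apply abs_le_of_sq_le_sq'' _ (by positivity)
  have hcs := cauchy_schwarz L hpsd (a ^ k) (b ^ m)
  have e2 : (a ^ k) ^ 2 = a ^ (2 * k) := by ring
  have e3 : (b ^ m) ^ 2 = b ^ (2 * m) := by ring
  rw [e2, e3] at hcs
  have ha : L (a ^ (2 * k)) ≤ vL L a ^ (2 * k) :=
    le_trans (le_abs_self _) (abs_pow_bound L hpsd h1 a (hfin a) (2 * k))
  have hb : L (b ^ (2 * m)) ≤ vL L b ^ (2 * m) :=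
    le_trans (le_abs_self _) (abs_pow_bound L hpsd h1 b (hfin b) (2 * m))
  calc (L (a ^ k * b ^ m)) ^ 2 ≤ L (a ^ (2 * k)) * L (b ^ (2 * m)) := hcs
    _ ≤ vL L a ^ (2 * k) * vL L b ^ (2 * m) :=
        mul_le_mul ha hb (m_nonneg L hpsd b m) (by positivity)
    _ = (vL L a ^ k * vL L b ^ m) ^ 2 := by ring

include hpsd h1 hfin in
lemma vL_add (a b : A) : vL L (a + b) ≤ vL L a + vL L b := by
  have hva : 0 ≤ vL L a := Real.sqrt_nonneg _
  have hvb : 0 ≤ vL L b := Real.sqrt_nonneg _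
  apply vL_le_of_bound L hpsd h1 _ _ (by positivity)
  intro n
  rw [add_pow, map_sum]
  calc |∑ k ∈ Finset.range (n + 1), L (a ^ k * b ^ (n - k) * (n.choose k : A))|
      ≤ ∑ k ∈ Finset.range (n + 1), |L (a ^ k * b ^ (n - k) * (n.choose k : A))| :=
        Finset.abs_sum_le_sum_abs _ _
    _ ≤ ∑ k ∈ Finset.range (n + 1), vL L a ^ k * vL L b ^ (n - k) * (n.choose k : ℝ) := by
        apply Finset.sum_le_sum
        intro k _
        have e : a ^ k * b ^ (n - k) * (n.choose k : A) = (n.choose k) • (a ^ k * b ^ (n - k)) := by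
          rw [nsmul_eq_mul, mul_comm]
        rw [e, map_nsmul, nsmul_eq_mul, abs_mul, Nat.abs_cast, mul_comm]
        exact mul_le_mul_of_nonneg_right (mixed_bound L hpsd h1 hfin a b k (n - k)) (by positivity)
    _ = (vL L a + vL L b) ^ n := (add_pow _ _ _).symm

include hpsd h1 hfin in
lemma vL_smul_le (α : ℝ) (a : A) : vL L (α • a) ≤ |α| * vL L a := by
  have hva : 0 ≤ vL L a := Real.sqrt_nonneg _
  apply vL_le_of_bound L hpsd h1 _ _ (by positivity)
  intro n
  rw [smul_pow, _root_.map_smul, smul_eq_mul, abs_mul, abs_pow, mul_pow]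
  exact mul_le_mul_of_nonneg_left (abs_pow_bound L hpsd h1 a (hfin a) n) (by positivity)

include hpsd h1 hfin in
lemma vL_smul (α : ℝ) (a : A) : vL L (α • a) = |α| * vL L a := by
  rcases eq_or_ne α 0 with rfl | hα
  · simp only [zero_smul, abs_zero, zero_mul]
    refine le_antisymm ?_ (Real.sqrt_nonneg _)
    apply vL_le_of_bound L hpsd h1 _ _ le_rfl
    intro n
    rcases Nat.eq_zero_or_pos n with rfl | hn
    · simp [h1]
    · rw [zero_pow hn.ne', map_zero, abs_zero, zero_pow hn.ne']
  · refine le_antisymm (vL_smul_le L hpsd h1 hfin α a) ?_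
    have := vL_smul_le L hpsd h1 hfin α⁻¹ (α • a)
    rw [smul_smul, inv_mul_cancel₀ hα, one_smul, abs_inv] at this
    have hαpos : 0 < |α| := abs_pos.mpr hα
    calc |α| * vL L a ≤ |α| * (|α|⁻¹ * vL L (α • a)) :=
          mul_le_mul_of_nonneg_left this hαpos.le
      _ = vL L (α • a) := by field_simp
end

theorem stmt13 (L : A →ₗ[ℝ] ℝ) (hpsd : ∀ x : A, 0 ≤ L (x ^ 2)) (h1 : L 1 = 1)
    (hfin : ∀ a : A, BddAbove (ratioSet L a)) :
    (∀ a b : A, vL L (a + b) ≤ vL L a + vL L b) ∧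
    (∀ (α : ℝ) (a : A), vL L (α • a) = |α| * vL L a) :=
  ⟨vL_add L hpsd h1 hfin, vL_smul L hpsd h1 hfin⟩
end

section
/- Let L be a positive semidefinite linear functional on a unital commutative ℝ-algebra A with L(1)=1, suppose the function n ↦ L(aⁿ) satisfies |L(aⁿ)| ≤ cⁿ for all n ∈ ℕ₀ for some c ≥ 0, and fix m ∈ ℕ₀. Then |L(a^k · a^{2m})| ≤ c^k · L(a^{2m}) for all k ∈ ℕ₀. -/
/-!
Put `φ j = L (a ^ j * a ^ (2 * m))`. Cauchy–Schwarz for the positive functional `L`, applied to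
`a ^ j * a ^ m` and `a ^ m`, gives `φ j ^ 2 ≤ φ (2 * j) * φ 0`. If `φ 0 > 0`, then `ψ = φ / φ 0`
satisfies `ψ j ^ 2 ≤ ψ (2 * j)`, so `|ψ k| ^ 2 ^ n ≤ |ψ (2 ^ n * k)| ≤ C * (c ^ k) ^ 2 ^ n` with
`C = c ^ (2 * m) / φ 0`; taking `2 ^ n`-th roots and letting `n → ∞` removes the constant `C`.
-/

variable {A : Type*} [CommRing A] [Algebra ℝ A]

open Filter Topology

theorem le_of_forall_pow_two_pow_le_mul_pow {x y C : ℝ} (hy : 0 ≤ y)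
    (h : ∀ n : ℕ, x ^ 2 ^ n ≤ C * y ^ 2 ^ n) : x ≤ y := by
  by_contra! hyx
  have hx : 0 < x := hy.trans_lt hyx
  have hlim : Tendsto (fun n : ℕ ↦ C * (y / x) ^ 2 ^ n) atTop (𝓝 0) := by
    simpa using ((tendsto_pow_atTop_nhds_zero_of_lt_one (by positivity)
      ((div_lt_one hx).2 hyx)).comp (tendsto_pow_atTop_atTop_of_one_lt one_lt_two)).const_mul C
  obtain ⟨n, hn⟩ := (hlim.eventually (gt_mem_nhds one_pos)).exists
  have hxn : 0 < x ^ 2 ^ n := by positivity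
  have : 1 ≤ C * (y / x) ^ 2 ^ n := by
    rw [div_pow, mul_div_assoc', le_div_iff₀ hxn, one_mul]
    exact h n
  linarith

theorem abs_pow_two_pow_le_abs_of_sq_le {ψ : ℕ → ℝ} (h : ∀ j, ψ j ^ 2 ≤ ψ (2 * j))
    (k n : ℕ) : |ψ k| ^ 2 ^ n ≤ |ψ (2 ^ n * k)| := by
  induction n with
  | zero => simp
  | succ n ih =>
    calc |ψ k| ^ 2 ^ (n + 1) = (|ψ k| ^ 2 ^ n) ^ 2 := by rw [pow_succ, pow_mul]
      _ ≤ |ψ (2 ^ n * k)| ^ 2 := pow_le_pow_left₀ (by positivity) ih 2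
      _ = ψ (2 ^ n * k) ^ 2 := sq_abs _
      _ ≤ ψ (2 * (2 ^ n * k)) := h _
      _ ≤ |ψ (2 ^ (n + 1) * k)| := by rw [← mul_assoc, ← pow_succ']; exact le_abs_self _

theorem abs_le_pow_of_sq_le_of_abs_le_mul_pow {ψ : ℕ → ℝ} {c C : ℝ} (hc : 0 ≤ c)
    (hsq : ∀ j, ψ j ^ 2 ≤ ψ (2 * j)) (hbd : ∀ j, |ψ j| ≤ C * c ^ j) (k : ℕ) :
    |ψ k| ≤ c ^ k :=
  le_of_forall_pow_two_pow_le_mul_pow (pow_nonneg hc k) fun n ↦ by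
    calc |ψ k| ^ 2 ^ n ≤ |ψ (2 ^ n * k)| := abs_pow_two_pow_le_abs_of_sq_le hsq k n
      _ ≤ C * (c ^ k) ^ 2 ^ n := by rw [← pow_mul, mul_comm k]; exact hbd _

theorem abs_le_pow_mul_of_sq_le_mul {φ : ℕ → ℝ} {c C : ℝ} (hc : 0 ≤ c) (h0 : 0 ≤ φ 0)
    (hsq : ∀ j, φ j ^ 2 ≤ φ (2 * j) * φ 0) (hbd : ∀ j, |φ j| ≤ C * c ^ j) (k : ℕ) :
    |φ k| ≤ c ^ k * φ 0 := by
  rcases h0.eq_or_lt with h0 | h0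
  · have : φ k = 0 := pow_eq_zero_iff two_ne_zero |>.1 <|
      le_antisymm (by simpa [← h0] using hsq k) (sq_nonneg _)
    simp [this, ← h0]
  · rw [← div_le_iff₀ h0, ← abs_of_pos h0, ← abs_div]
    refine abs_le_pow_of_sq_le_of_abs_le_mul_pow (ψ := fun j ↦ φ j / φ 0) (C := C / φ 0) hc
      (fun j ↦ ?_) (fun j ↦ ?_) k
    · rw [div_pow, div_le_div_iff₀ (by positivity) h0, sq (φ 0), ← mul_assoc]
      exact mul_le_mul_of_nonneg_right (hsq j) h0.le
    · rw [abs_div, abs_of_pos h0, div_mul_eq_mul_div]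
      exact div_le_div_of_nonneg_right (hbd j) h0.le

theorem LinearMap.apply_mul_sq_le {L : A →ₗ[ℝ] ℝ} (hL : ∀ x : A, 0 ≤ L (x ^ 2)) (x y : A) :
    L (x * y) ^ 2 ≤ L (x ^ 2) * L (y ^ 2) := by
  have hq : ∀ t : ℝ, 0 ≤ L (y ^ 2) * (t * t) + 2 * L (x * y) * t + L (x ^ 2) := fun t ↦ by
    have e : (x + t • y) ^ 2 = x ^ 2 + (2 * t) • (x * y) + (t * t) • y ^ 2 := by
      simp only [Algebra.smul_def, map_mul, map_ofNat]
      ring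
    have := hL (x + t • y)
    rw [e, map_add, map_add, map_smul, map_smul, smul_eq_mul, smul_eq_mul] at this
    linarith
  have := discrim_le_zero hq
  rw [discrim] at this
  linarith

theorem stmt19_general (L : A →ₗ[ℝ] ℝ) (hpsd : ∀ x : A, 0 ≤ L (x ^ 2))
    (a : A) (c : ℝ) (hc : 0 ≤ c) (hbd : ∀ n : ℕ, |L (a ^ n)| ≤ c ^ n) (m : ℕ) :
    ∀ k : ℕ, |L (a ^ k * a ^ (2 * m))| ≤ c ^ k * L (a ^ (2 * m)) := by
  have hφ0 : 0 ≤ L (a ^ 0 * a ^ (2 * m)) := by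
    rw [pow_zero, one_mul, pow_mul']; exact hpsd _
  have hsq : ∀ j, L (a ^ j * a ^ (2 * m)) ^ 2
      ≤ L (a ^ (2 * j) * a ^ (2 * m)) * L (a ^ 0 * a ^ (2 * m)) := fun j ↦ by
    convert LinearMap.apply_mul_sq_le hpsd (a ^ j * a ^ m) (a ^ m) using 3 <;> ring
  have hexp : ∀ j, |L (a ^ j * a ^ (2 * m))| ≤ c ^ (2 * m) * c ^ j := fun j ↦ by
    rw [← pow_add, ← pow_add, add_comm]; exact hbd _
  simpa using abs_le_pow_mul_of_sq_le_mul hc hφ0 hsq hexp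

theorem stmt19 (L : A →ₗ[ℝ] ℝ) (hpsd : ∀ x : A, 0 ≤ L (x ^ 2)) (h1 : L 1 = 1)
    (a : A) (c : ℝ) (hc : 0 ≤ c) (hbd : ∀ n : ℕ, |L (a ^ n)| ≤ c ^ n) (m : ℕ) :
    ∀ k : ℕ, |L (a ^ k * a ^ (2 * m))| ≤ c ^ k * L (a ^ (2 * m)) :=
  stmt19_general L hpsd a c hc hbd m
end
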